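/- arXiv:2005.06961 — 11 statements merged into one kernel-verified Lean document; each statement's English description precedes it below -/
import Mathlib

section
/- Let q ∈ ℂ with q ≠ 0 and q² ≠ 1. For every function f : ℂ → ℂ and every z ∈ ℂ with z ≠ 0 and q^{2k}z² ≠ 1 for k ∈ {−1,0,1}, the q-difference operators Y, U, V satisfy the three-dimensional degenerate Sklyanin algebra relations: (V(Yf))(z) = q·(Y(Vf))(z), (Y(Uf))(z) = q·(U(Yf))(z), and (U(Vf))(z) − (V(Uf))(z) = (q − q⁻¹)·(Y(Yf))(z). -/
/-!
Each of `Y`, `U`, `V` has the form `f ↦ a(z) f(qz) + b(z) f(q⁻¹z)`, and a composite of two such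
operators is `f ↦ A f(q²z) + B f(z) + C f(q⁻²z)`. Each relation therefore reduces to three
identities between rational functions of `q` and `z`, whose denominators `z - z⁻¹`,
`qz - (qz)⁻¹`, `q⁻¹z - (q⁻¹z)⁻¹` vanish only where `q^{2k} z² = 1`.
-/

noncomputable def Yop (q : ℂ) (f : ℂ → ℂ) (z : ℂ) : ℂ :=
  (f (q * z) - f (q⁻¹ * z)) / (z - z⁻¹)

noncomputable def Uop (q : ℂ) (f : ℂ → ℂ) (z : ℂ) : ℂ :=
  (z * f (q * z) - z⁻¹ * f (q⁻¹ * z)) / (z - z⁻¹)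

noncomputable def Vop (q : ℂ) (f : ℂ → ℂ) (z : ℂ) : ℂ :=
  (z * f (q⁻¹ * z) - z⁻¹ * f (q * z)) / (z - z⁻¹)

noncomputable def qShiftOp (q : ℂ) (a b f : ℂ → ℂ) (z : ℂ) : ℂ :=
  a z * f (q * z) + b z * f (q⁻¹ * z)

lemma qShiftOp_qShiftOp_apply {q : ℂ} (hq : q ≠ 0) (a b c d f : ℂ → ℂ) (z : ℂ) :
    qShiftOp q a b (qShiftOp q c d f) z =
      a z * c (q * z) * f (q * (q * z)) + (a z * d (q * z) + b z * c (q⁻¹ * z)) * f z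
        + b z * d (q⁻¹ * z) * f (q⁻¹ * (q⁻¹ * z)) := by
  simp only [qShiftOp, inv_mul_cancel_left₀ hq, mul_inv_cancel_left₀ hq]
  ring

lemma Yop_eq_qShiftOp (q : ℂ) :
    Yop q = qShiftOp q (fun z => (z - z⁻¹)⁻¹) (fun z => -(z - z⁻¹)⁻¹) := by
  ext f z
  simp only [Yop, qShiftOp]
  ring

lemma Uop_eq_qShiftOp (q : ℂ) :
    Uop q = qShiftOp q (fun z => z / (z - z⁻¹)) (fun z => -z⁻¹ / (z - z⁻¹)) := by
  ext f z
  simp only [Uop, qShiftOp]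
  ring

lemma Vop_eq_qShiftOp (q : ℂ) :
    Vop q = qShiftOp q (fun z => -z⁻¹ / (z - z⁻¹)) (fun z => z / (z - z⁻¹)) := by
  ext f z
  simp only [Vop, qShiftOp]
  ring

section Relations

variable {q z : ℂ} (f : ℂ → ℂ)

lemma Vop_Yop_eq_mul_Yop_Vop (hq : q ≠ 0) (h1 : z ^ 2 * q ^ 2 - 1 ≠ 0)
    (hm1 : z ^ 2 - q ^ 2 ≠ 0) : Vop q (Yop q f) z = q * Yop q (Vop q f) z := by
  rw [Vop_eq_qShiftOp, Yop_eq_qShiftOp, qShiftOp_qShiftOp_apply hq, qShiftOp_qShiftOp_apply hq]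
  field_simp
  ring

lemma Yop_Uop_eq_mul_Uop_Yop (hq : q ≠ 0) (h1 : z ^ 2 * q ^ 2 - 1 ≠ 0)
    (hm1 : z ^ 2 - q ^ 2 ≠ 0) : Yop q (Uop q f) z = q * Uop q (Yop q f) z := by
  rw [Uop_eq_qShiftOp, Yop_eq_qShiftOp, qShiftOp_qShiftOp_apply hq, qShiftOp_qShiftOp_apply hq]
  field_simp
  ring

lemma Uop_Vop_sub_Vop_Uop (hq : q ≠ 0) (hz : z ≠ 0) (h1 : z ^ 2 * q ^ 2 - 1 ≠ 0)
    (hm1 : z ^ 2 - q ^ 2 ≠ 0) :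
    Uop q (Vop q f) z - Vop q (Uop q f) z = (q - q⁻¹) * Yop q (Yop q f) z := by
  rw [Uop_eq_qShiftOp, Vop_eq_qShiftOp, Yop_eq_qShiftOp, qShiftOp_qShiftOp_apply hq,
    qShiftOp_qShiftOp_apply hq, qShiftOp_qShiftOp_apply hq]
  field_simp
  ring

end Relations

theorem ska3_relations_general (q : ℂ) (hq : q ≠ 0)
    (f : ℂ → ℂ) (z : ℂ) (hz : z ≠ 0)
    (h1 : q ^ 2 * z ^ 2 ≠ 1) (hm1 : q⁻¹ ^ 2 * z ^ 2 ≠ 1) :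
    Vop q (Yop q f) z = q * Yop q (Vop q f) z ∧
    Yop q (Uop q f) z = q * Uop q (Yop q f) z ∧
    Uop q (Vop q f) z - Vop q (Uop q f) z = (q - q⁻¹) * Yop q (Yop q f) z := by
  have h1' : z ^ 2 * q ^ 2 - 1 ≠ 0 := sub_ne_zero.2 (by rwa [mul_comm])
  have hm1' : z ^ 2 - q ^ 2 ≠ 0 := by
    contrapose! hm1
    field_simp
    linear_combination hm1
  exact ⟨Vop_Yop_eq_mul_Yop_Vop f hq h1' hm1', Yop_Uop_eq_mul_Uop_Yop f hq h1' hm1',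
    Uop_Vop_sub_Vop_Uop f hq hz h1' hm1'⟩

/-- the realization `Y, U, V` satisfies the relations of the
three-dimensional degenerate Sklyanin algebra `ska₃`, pointwise. -/
theorem ska3_relations (q : ℂ) (hq : q ≠ 0) (hq2 : q ^ 2 ≠ 1)
    (f : ℂ → ℂ) (z : ℂ) (hz : z ≠ 0)
    (h0 : z ^ 2 ≠ 1) (h1 : q ^ 2 * z ^ 2 ≠ 1) (hm1 : q⁻¹ ^ 2 * z ^ 2 ≠ 1) :
    Vop q (Yop q f) z = q * Yop q (Vop q f) z ∧
    Yop q (Uop q f) z = q * Uop q (Yop q f) z ∧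
    Uop q (Vop q f) z - Vop q (Uop q f) z = (q - q⁻¹) * Yop q (Yop q f) z :=
  ska3_relations_general q hq f z hz h1 hm1
end

section
/- Let q ∈ ℂ with q ≠ 0 and q² ≠ 1. For every function f : ℂ → ℂ and every z ∈ ℂ with z ≠ 0 and q^{2k}z² ≠ 1 for k ∈ {−1,0,1}, the operators Y, U, V satisfy the Casimir relations (U(Vf))(z) = f(z) − q⁻¹·(Y(Yf))(z) and (V(Uf))(z) = f(z) − q·(Y(Yf))(z). -/
/-! Replacing `q` by `q⁻¹` swaps `U` and `V` and changes the sign of `Y`, so the second relation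
is the first one for `q⁻¹`. For the first one, put `D(w) = w - w⁻¹`. In `U(Vf)(z)` and
`-q⁻¹ Y(Yf)(z)` the coefficients of `f(q^{±2} z)` agree on sight; those of `f(z)` agree because
`w * D(w) = w² - 1` at `w = z, qz, q⁻¹z` gives `(q z² - q⁻¹) / D(qz) = z` and
`(q z⁻² - q⁻¹) / D(q⁻¹z) = -z⁻¹`. -/

theorem mul_sub_inv_self {K : Type*} [Field K] {w : K} (hw : w ≠ 0) :
    w * (w - w⁻¹) = w ^ 2 - 1 := by
  rw [mul_sub, mul_inv_cancel₀ hw, sq]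

theorem sub_inv_ne_zero {K : Type*} [Field K] {w : K} (hw : w ≠ 0) (h : w ^ 2 ≠ 1) :
    w - w⁻¹ ≠ 0 := by
  intro h'
  apply h
  rw [← sub_eq_zero, ← mul_sub_inv_self hw, h', mul_zero]

theorem Vop_eq_Uop_inv (q : ℂ) (f : ℂ → ℂ) : Vop q f = Uop q⁻¹ f := by
  ext z
  rw [Vop, Uop, inv_inv]

theorem Uop_eq_Vop_inv (q : ℂ) (f : ℂ → ℂ) : Uop q f = Vop q⁻¹ f := by
  rw [Vop_eq_Uop_inv, inv_inv]

theorem Yop_inv (q : ℂ) (f : ℂ → ℂ) : Yop q⁻¹ f = -Yop q f := by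
  ext z
  simp only [Yop, inv_inv, Pi.neg_apply]
  rw [← neg_div, neg_sub]

theorem Yop_neg (q : ℂ) (f : ℂ → ℂ) : Yop q (-f) = -Yop q f := by
  ext z
  simp only [Yop, Pi.neg_apply]
  rw [neg_sub_neg, ← neg_div, neg_sub]

theorem Yop_inv_Yop_inv (q : ℂ) (f : ℂ → ℂ) : Yop q⁻¹ (Yop q⁻¹ f) = Yop q (Yop q f) := by
  rw [Yop_inv, Yop_inv, Yop_neg, neg_neg]

theorem Uop_Vop_apply {q : ℂ} (hq : q ≠ 0) (f : ℂ → ℂ) {z : ℂ} (hz : z ≠ 0)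
    (h0 : z ^ 2 ≠ 1) (h1 : q ^ 2 * z ^ 2 ≠ 1) (hm1 : q⁻¹ ^ 2 * z ^ 2 ≠ 1) :
    Uop q (Vop q f) z = f z - q⁻¹ * Yop q (Yop q f) z := by
  have hD := sub_inv_ne_zero hz h0
  have hP := sub_inv_ne_zero (mul_ne_zero hq hz) (by rwa [mul_pow])
  have hM := sub_inv_ne_zero (mul_ne_zero (inv_ne_zero hq) hz) (by rwa [mul_pow])
  have eD := mul_sub_inv_self hz
  have eP : q * z * (q * z - (q * z)⁻¹) = q ^ 2 * z ^ 2 - 1 := by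
    rw [mul_sub_inv_self (mul_ne_zero hq hz), mul_pow]
  have eM : q * z * (q⁻¹ * z - (q⁻¹ * z)⁻¹) = z ^ 2 - q ^ 2 := by
    field_simp
  simp only [Uop, Vop, Yop, mul_inv_cancel_left₀ hq, inv_mul_cancel_left₀ hq]
  -- Kept opaque, the denominators are not expanded by `field_simp`; `eD`, `eP`, `eM` tie them to `z`.
  generalize z - z⁻¹ = D at hD eD ⊢
  generalize q * z - (q * z)⁻¹ = P at hP eP ⊢
  generalize q⁻¹ * z - (q⁻¹ * z)⁻¹ = M at hM eM ⊢
  field_simp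
  linear_combination (-f z * M * z ^ 2) * eP + f z * P * eM - q * f z * M * P * z * eD

theorem ska3_casimir_general (q : ℂ) (hq : q ≠ 0)
    (f : ℂ → ℂ) (z : ℂ) (hz : z ≠ 0)
    (h0 : z ^ 2 ≠ 1) (h1 : q ^ 2 * z ^ 2 ≠ 1) (hm1 : q⁻¹ ^ 2 * z ^ 2 ≠ 1) :
    Uop q (Vop q f) z = f z - q⁻¹ * Yop q (Yop q f) z ∧
    Vop q (Uop q f) z = f z - q * Yop q (Yop q f) z := by
  refine ⟨Uop_Vop_apply hq f hz h0 h1 hm1, ?_⟩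
  have h := Uop_Vop_apply (inv_ne_zero hq) f hz h0 hm1 (by rwa [inv_inv])
  rwa [inv_inv, Yop_inv_Yop_inv, ← Uop_eq_Vop_inv, ← Vop_eq_Uop_inv] at h

/-- Casimir relations `UV = 1 - q⁻¹ Y²` and `VU = 1 - q Y²`, pointwise. -/
theorem ska3_casimir (q : ℂ) (hq : q ≠ 0) (hq2 : q ^ 2 ≠ 1)
    (f : ℂ → ℂ) (z : ℂ) (hz : z ≠ 0)
    (h0 : z ^ 2 ≠ 1) (h1 : q ^ 2 * z ^ 2 ≠ 1) (hm1 : q⁻¹ ^ 2 * z ^ 2 ≠ 1) :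
    Uop q (Vop q f) z = f z - q⁻¹ * Yop q (Yop q f) z ∧
    Vop q (Uop q f) z = f z - q * Yop q (Yop q f) z :=
  ska3_casimir_general q hq f z hz h0 h1 hm1
end

section
/- Let q ∈ ℂ with q ≠ 0 and q² ≠ 1, let a, b, γ ∈ ℂ, and set α = γ(a+b), β = −γab, and F(z) = γ(1 − az)(1 − bz)/(1 − z²). Then for every f : ℂ → ℂ and every z ∈ ℂ with z ≠ 0 and z² ≠ 1: α(Yf)(z) + β(Uf)(z) + γ(Vf)(z) = F(z)·f(qz) + F(z⁻¹)·f(q⁻¹z), and moreover F(z) + F(z⁻¹) = γ(1 − ab); in particular the linear combination αY + βU + γV has constant diagonal term. -/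
/-- with `α = γ(a+b)`, `β = -γab` and
`F(z) = γ(1-az)(1-bz)/(1-z²)`, the combination `αY + βU + γV` acts as
`F(z)T₊ + F(z⁻¹)T₋` and has constant diagonal term `F(z)+F(z⁻¹) = γ(1-ab)`. -/
theorem ska3_linear_combination (q : ℂ) (hq : q ≠ 0) (hq2 : q ^ 2 ≠ 1)
    (a b γ : ℂ) (α β : ℂ) (hα : α = γ * (a + b)) (hβ : β = -(γ * a * b))
    (F : ℂ → ℂ) (hF : ∀ w : ℂ, F w = γ * (1 - a * w) * (1 - b * w) / (1 - w ^ 2))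
    (f : ℂ → ℂ) (z : ℂ) (hz : z ≠ 0) (h0 : z ^ 2 ≠ 1) :
    α * Yop q f z + β * Uop q f z + γ * Vop q f z
      = F z * f (q * z) + F z⁻¹ * f (q⁻¹ * z) ∧
    F z + F z⁻¹ = γ * (1 - a * b) := by
  have h1 : (1 : ℂ) - z ^ 2 ≠ 0 := fun h => h0 (by linear_combination -h)
  have h2 : (1 : ℂ) - (z⁻¹) ^ 2 ≠ 0 := by
    rw [inv_pow]
    intro h
    apply h1
    have : (z ^ 2) * (1 - (z ^ 2)⁻¹) = z ^ 2 - 1 := by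
      field_simp
    rw [h, mul_zero] at this
    linear_combination this
  have hd : z - z⁻¹ ≠ 0 := by
    intro h
    apply h1
    have : z * (z - z⁻¹) = z ^ 2 - 1 := by field_simp
    rw [h, mul_zero] at this
    linear_combination this
  have h3 : z ^ 2 - 1 ≠ 0 := fun h => h0 (by linear_combination h)
  have h4 : (-1 : ℂ) + z ^ 2 ≠ 0 := fun h => h3 (by linear_combination h)
  have hFi : F z⁻¹ = γ * (z - a) * (z - b) / (z ^ 2 - 1) := by
    rw [hF]
    rw [div_eq_div_iff h2 h3]
    field_simp
    try ring
    try exact Or.inl trivial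
  constructor
  · have eY : Yop q f z = z * (f (q * z) - f (q⁻¹ * z)) / (z ^ 2 - 1) := by
      rw [Yop, div_eq_div_iff hd h3]; field_simp
    have eU : Uop q f z = (z ^ 2 * f (q * z) - f (q⁻¹ * z)) / (z ^ 2 - 1) := by
      rw [Uop, div_eq_div_iff hd h3]; field_simp
    have eV : Vop q f z = (z ^ 2 * f (q⁻¹ * z) - f (q * z)) / (z ^ 2 - 1) := by
      rw [Vop, div_eq_div_iff hd h3]; field_simp
    rw [hα, hβ, hF, hFi, eY, eU, eV]
    field_simp
    ring
  · rw [hF, hFi, div_add_div _ _ h1 h3, div_eq_iff (mul_ne_zero h1 h3)]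
    ring
end

section
/- Let q ∈ ℂ with q ≠ 0 and q² ≠ 1, and let a, b, c, d, γ, ζ ∈ ℂ. Define F(z) = γ(1 − az)(1 − bz)/(1 − z²) and G(z) = ζ(1 − q⁻¹cz)(1 − q⁻¹dz)/(1 − z²). Then for every z ∈ ℂ with z ≠ 0 and z² ∉ {1, q², q⁻²}: F(z)·G(q⁻¹z⁻¹) + F(z⁻¹)·G(q⁻¹z) = −F(z)·G(qz) − F(z⁻¹)·G(qz⁻¹) + γζ(abcd·q⁻² − ab − cd·q⁻² + 1). -/
/-!
Writing `f(w) = κ(1 - αw)(1 - βw)/(1 - w²)`, one has `f(w⁻¹) = κ(w - α)(w - β)/(w² - 1)`, and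
`(1 - αw)(1 - βw) - (w - α)(w - β) = (1 - αβ)(1 - w²)`, so `f(w) + f(w⁻¹) = κ(1 - αβ)` is constant.
Applied to `F` at `z`, and to `G` at `qz` and at `q⁻¹z`, this gives
`F(z) + F(z⁻¹) = γ(1 - ab)` and `G(qz) + G(q⁻¹z⁻¹) = G(q⁻¹z) + G(qz⁻¹) = ζ(1 - cdq⁻²)`;
the identity is the product of these, as `γζ(1 - ab)(1 - cdq⁻²)` is the constant on its right.
-/

def quadRatio {K : Type*} [Field K] (κ α β w : K) : K :=
  κ * (1 - α * w) * (1 - β * w) / (1 - w ^ 2)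

theorem quadRatio_add_quadRatio_inv {K : Type*} [Field K] (κ α β : K) {w : K} (hw : w ≠ 0)
    (hw2 : w ^ 2 ≠ 1) : quadRatio κ α β w + quadRatio κ α β w⁻¹ = κ * (1 - α * β) := by
  have h : 1 - w ^ 2 ≠ 0 := sub_ne_zero.mpr hw2.symm
  unfold quadRatio
  field_simp
  ring

theorem FG_identity_general (q : ℂ) (hq : q ≠ 0)
    (a b c d γ ζ : ℂ)
    (F G : ℂ → ℂ)
    (hF : ∀ w : ℂ, F w = γ * (1 - a * w) * (1 - b * w) / (1 - w ^ 2))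
    (hG : ∀ w : ℂ, G w = ζ * (1 - q⁻¹ * c * w) * (1 - q⁻¹ * d * w) / (1 - w ^ 2))
    (z : ℂ) (hz : z ≠ 0) (h0 : z ^ 2 ≠ 1) (h1 : z ^ 2 ≠ q ^ 2)
    (hm1 : z ^ 2 ≠ q⁻¹ ^ 2) :
    F z * G (q⁻¹ * z⁻¹) + F z⁻¹ * G (q⁻¹ * z)
      = -(F z * G (q * z)) - F z⁻¹ * G (q * z⁻¹)
        + γ * ζ * (a * b * c * d * q⁻¹ ^ 2 - a * b - c * d * q⁻¹ ^ 2 + 1) := by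
  have hF' : F = quadRatio γ a b := funext hF
  have hG' : G = quadRatio ζ (q⁻¹ * c) (q⁻¹ * d) := funext hG
  have hqz : (q * z) ^ 2 ≠ 1 := fun h =>
    hm1 (by rw [inv_pow]; exact eq_inv_of_mul_eq_one_right (by rwa [← mul_pow]))
  have hqz' : (q⁻¹ * z) ^ 2 ≠ 1 := by
    rwa [mul_pow, inv_pow, Ne, inv_mul_eq_one₀ (pow_ne_zero 2 hq), eq_comm]
  have sumF := quadRatio_add_quadRatio_inv γ a b hz h0
  have sumG := quadRatio_add_quadRatio_inv ζ (q⁻¹ * c) (q⁻¹ * d) (mul_ne_zero hq hz) hqz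
  have sumG' := quadRatio_add_quadRatio_inv ζ (q⁻¹ * c) (q⁻¹ * d)
    (mul_ne_zero (inv_ne_zero hq) hz) hqz'
  rw [← hF'] at sumF
  rw [← hG', mul_inv] at sumG sumG'
  rw [inv_inv] at sumG'
  linear_combination F z * sumG + F z⁻¹ * sumG' + ζ * (1 - q⁻¹ * c * (q⁻¹ * d)) * sumF

/-- the key identity
`F(z)G(q⁻¹z⁻¹) + F(z⁻¹)G(q⁻¹z) = -F(z)G(qz) - F(z⁻¹)G(qz⁻¹) + Γ`
with `Γ = γζ(abcdq⁻² - ab - cdq⁻² + 1)`. -/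
theorem FG_identity (q : ℂ) (hq : q ≠ 0) (hq2 : q ^ 2 ≠ 1)
    (a b c d γ ζ : ℂ)
    (F G : ℂ → ℂ)
    (hF : ∀ w : ℂ, F w = γ * (1 - a * w) * (1 - b * w) / (1 - w ^ 2))
    (hG : ∀ w : ℂ, G w = ζ * (1 - q⁻¹ * c * w) * (1 - q⁻¹ * d * w) / (1 - w ^ 2))
    (z : ℂ) (hz : z ≠ 0) (h0 : z ^ 2 ≠ 1) (h1 : z ^ 2 ≠ q ^ 2)
    (hm1 : z ^ 2 ≠ q⁻¹ ^ 2) :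
    F z * G (q⁻¹ * z⁻¹) + F z⁻¹ * G (q⁻¹ * z)
      = -(F z * G (q * z)) - F z⁻¹ * G (q * z⁻¹)
        + γ * ζ * (a * b * c * d * q⁻¹ ^ 2 - a * b - c * d * q⁻¹ ^ 2 + 1) :=
  FG_identity_general q hq a b c d γ ζ F G hF hG z hz h0 h1 hm1
end

section
/- Let q ∈ ℂ with q ≠ 0 and q² ≠ 1, and let a, b, c, d ∈ ℂ. Set α = a + b, β = −ab, δ = q⁻¹(c + d), ε = −q⁻²cd, and let M₍₁₎ = αY + βU + V and M₍₂₎ = δY + εU + V. Then for every f : ℂ → ℂ and every z ∈ ℂ with z ≠ 0 and q^{2k}z² ≠ 1 for k ∈ {−2,−1,0,1,2}: (M₍₁₎(M₍₂₎f))(z) = A(z)·f(q²z) − (A(z) + A(z⁻¹))·f(z) + A(z⁻¹)·f(q⁻²z) + (abcd·q⁻² − ab − cd·q⁻² + 1)·f(z), where A(z) = (1 − az)(1 − bz)(1 − cz)(1 − dz)/((1 − z²)(1 − q²z²)); that is, M₍₁₎M₍₂₎ equals the Askey–Wilson operator in base q² plus the constant abcd·q⁻² − ab − cd·q⁻² +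 1 times the identity. -/
/-- `M^(α,β,γ) = αY + βU + γV` -/
noncomputable def Mop (q α β γ : ℂ) (f : ℂ → ℂ) : ℂ → ℂ :=
  fun z => α * Yop q f z + β * Uop q f z + γ * Vop q f z

lemma sub_inv_ne (w : ℂ) (hw : w ≠ 0) (hw2 : w ^ 2 ≠ 1) : w - w⁻¹ ≠ 0 := by
  intro h
  apply hw2
  have hww : w = w⁻¹ := sub_eq_zero.mp h
  calc w ^ 2 = w * w := sq w
  _ = w * w⁻¹ := by rw [← hww]
  _ = 1 := mul_inv_cancel₀ hw

lemma Mop_closed (q δ ε : ℂ) (f : ℂ → ℂ) (w : ℂ) :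
    Mop q δ ε 1 f w
      = ((δ + ε * w - w⁻¹) * f (q * w) + (w - δ - ε * w⁻¹) * f (q⁻¹ * w)) / (w - w⁻¹) := by
  simp only [Mop, Yop, Uop, Vop]
  ring

lemma ratio_eq {n d N D s : ℂ} (hs : s ≠ 0) (hn : n = s * N) (hd : d = s * D) :
    n / d = N / D := by
  subst hn hd; exact mul_div_mul_left _ _ hs

set_option maxHeartbeats 1600000 in
/-- the factorization of the Askey–Wilson operator in base `q²`:
`M^(α,β,1) M^(δ,ε,1) = L_{q²}^{(a,b,c,d)} + (abcdq⁻² - ab - cdq⁻² + 1) I`. -/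
theorem AW_factorization (q : ℂ) (hq : q ≠ 0) (hq2 : q ^ 2 ≠ 1)
    (a b c d : ℂ) (α β δ ε : ℂ)
    (hα : α = a + b) (hβ : β = -(a * b))
    (hδ : δ = q⁻¹ * (c + d)) (hε : ε = -(q⁻¹ ^ 2 * c * d))
    (A : ℂ → ℂ)
    (hA : ∀ w : ℂ, A w = (1 - a * w) * (1 - b * w) * (1 - c * w) * (1 - d * w)
        / ((1 - w ^ 2) * (1 - q ^ 2 * w ^ 2)))
    (f : ℂ → ℂ) (z : ℂ) (hz : z ≠ 0)
    (h0 : z ^ 2 ≠ 1) (h1 : q ^ 2 * z ^ 2 ≠ 1) (hm1 : q⁻¹ ^ 2 * z ^ 2 ≠ 1)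
    (h2 : (q ^ 2) ^ 2 * z ^ 2 ≠ 1) (hm2 : (q⁻¹ ^ 2) ^ 2 * z ^ 2 ≠ 1) :
    Mop q α β 1 (Mop q δ ε 1 f) z
      = A z * f (q ^ 2 * z) - (A z + A z⁻¹) * f z + A z⁻¹ * f (q⁻¹ ^ 2 * z)
        + (a * b * c * d * q⁻¹ ^ 2 - a * b - c * d * q⁻¹ ^ 2 + 1) * f z := by
  subst hα hβ hδ hε
  have hiq : q⁻¹ ≠ 0 := inv_ne_zero hq
  have hiz : z⁻¹ ≠ 0 := inv_ne_zero hz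
  have e1 : q * (q * z) = q ^ 2 * z := by ring
  have e2 : q⁻¹ * (q * z) = z := by field_simp
  have e3 : q * (q⁻¹ * z) = z := by field_simp
  have e4 : q⁻¹ * (q⁻¹ * z) = q⁻¹ ^ 2 * z := by ring
  have c0 : (1 : ℂ) - z ^ 2 ≠ 0 := fun h => h0 (by linear_combination -h)
  have c1 : (1 : ℂ) - q ^ 2 * z ^ 2 ≠ 0 := fun h => h1 (by linear_combination -h)
  have c0m : z ^ 2 - (1 : ℂ) ≠ 0 := fun h => h0 (by linear_combination h)
  have c1m : q ^ 2 * z ^ 2 - (1 : ℂ) ≠ 0 := fun h => h1 (by linear_combination h)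
  have czq : z ^ 2 - q ^ 2 ≠ 0 := by
    intro h
    apply hm1
    have hz2 : z ^ 2 = q ^ 2 := by linear_combination h
    rw [hz2]; field_simp
  have hq2ne : (q : ℂ) ^ 2 ≠ 0 := pow_ne_zero 2 hq
  -- the six ratio identities, converting the operator coefficients to inverse-free fractions
  have hR1 : ((a + b) + -(a * b) * z - z⁻¹) / (z - z⁻¹)
      = (1 - a * z) * (1 - b * z) / (1 - z ^ 2) := by
    refine ratio_eq (s := -z⁻¹) (by simpa using hz) ?_ ?_ <;> field_simp <;> ring
  have hR2 : (q⁻¹ * (c + d) + -(q⁻¹ ^ 2 * c * d) * (q * z) - (q * z)⁻¹) / (q * z - (q * z)⁻¹)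
      = (1 - c * z) * (1 - d * z) / (1 - q ^ 2 * z ^ 2) := by
    refine ratio_eq (s := -(q⁻¹ * z⁻¹)) (by simp [hq, hz]) ?_ ?_ <;> field_simp <;> ring
  have hR3 : (z - (a + b) - -(a * b) * z⁻¹) / (z - z⁻¹)
      = (z - a) * (z - b) / (z ^ 2 - 1) := by
    refine ratio_eq (s := z⁻¹) hiz ?_ ?_ <;> field_simp <;> ring
  have hR4 : (q⁻¹ * z - q⁻¹ * (c + d) - -(q⁻¹ ^ 2 * c * d) * (q⁻¹ * z)⁻¹)
        / (q⁻¹ * z - (q⁻¹ * z)⁻¹)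
      = (z - c) * (z - d) / (z ^ 2 - q ^ 2) := by
    refine ratio_eq (s := q⁻¹ * z⁻¹) (by simp [hq, hz]) ?_ ?_ <;> field_simp <;> ring
  have hR5 : (q * z - q⁻¹ * (c + d) - -(q⁻¹ ^ 2 * c * d) * (q * z)⁻¹) / (q * z - (q * z)⁻¹)
      = (q ^ 2 * z - c) * (q ^ 2 * z - d) / (q ^ 2 * (q ^ 2 * z ^ 2 - 1)) := by
    refine ratio_eq (s := q⁻¹ ^ 3 * z⁻¹) (by simp [hq, hz]) ?_ ?_ <;> field_simp <;> ring
  have hR6 : (q⁻¹ * (c + d) + -(q⁻¹ ^ 2 * c * d) * (q⁻¹ * z) - (q⁻¹ * z)⁻¹)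
        / (q⁻¹ * z - (q⁻¹ * z)⁻¹)
      = (q ^ 2 - c * z) * (q ^ 2 - d * z) / (q ^ 2 * (q ^ 2 - z ^ 2)) := by
    refine ratio_eq (s := -(q⁻¹ ^ 3 * z⁻¹)) (by simp [hq, hz]) ?_ ?_ <;> field_simp <;> ring
  -- expressing A z and A z⁻¹ through the fractions
  have hA1 : (1 - a * z) * (1 - b * z) / (1 - z ^ 2)
      * ((1 - c * z) * (1 - d * z) / (1 - q ^ 2 * z ^ 2)) = A z := by
    rw [hA, div_mul_div_comm, div_eq_div_iff (mul_ne_zero c0 c1) (mul_ne_zero c0 c1)]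
    ring
  have hA2 : (z - a) * (z - b) / (z ^ 2 - 1) * ((z - c) * (z - d) / (z ^ 2 - q ^ 2))
      = A z⁻¹ := by
    rw [hA, div_mul_div_comm]
    refine (ratio_eq (s := z⁻¹ ^ 4) (pow_ne_zero 4 hiz) ?_ ?_).symm <;> field_simp <;> ring
  -- the middle-coefficient identity, over the common denominator W
  have hW : q ^ 2 * ((1 - z ^ 2) * ((1 - q ^ 2 * z ^ 2) * (z ^ 2 - q ^ 2))) ≠ 0 :=
    mul_ne_zero hq2ne (mul_ne_zero c0 (mul_ne_zero c1 czq))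
  have hE1 : (1 - a * z) * (1 - b * z) / (1 - z ^ 2)
        * ((q ^ 2 * z - c) * (q ^ 2 * z - d) / (q ^ 2 * (q ^ 2 * z ^ 2 - 1)))
      = (1 - a * z) * (1 - b * z) * ((q ^ 2 * z - c) * (q ^ 2 * z - d)) * (q ^ 2 - z ^ 2)
        / (q ^ 2 * ((1 - z ^ 2) * ((1 - q ^ 2 * z ^ 2) * (z ^ 2 - q ^ 2)))) := by
    rw [div_mul_div_comm,
      div_eq_div_iff (mul_ne_zero c0 (mul_ne_zero hq2ne c1m)) hW]
    ring
  have hE2 : (z - a) * (z - b) / (z ^ 2 - 1)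
        * ((q ^ 2 - c * z) * (q ^ 2 - d * z) / (q ^ 2 * (q ^ 2 - z ^ 2)))
      = (z - a) * (z - b) * ((q ^ 2 - c * z) * (q ^ 2 - d * z)) * (1 - q ^ 2 * z ^ 2)
        / (q ^ 2 * ((1 - z ^ 2) * ((1 - q ^ 2 * z ^ 2) * (z ^ 2 - q ^ 2)))) := by
    have hqz : q ^ 2 - z ^ 2 ≠ 0 := fun h => czq (by linear_combination -h)
    rw [div_mul_div_comm, div_eq_div_iff (mul_ne_zero c0m (mul_ne_zero hq2ne hqz)) hW]
    ring
  have hE3 : (1 - a * z) * (1 - b * z) / (1 - z ^ 2)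
        * ((1 - c * z) * (1 - d * z) / (1 - q ^ 2 * z ^ 2))
      = (1 - a * z) * (1 - b * z) * ((1 - c * z) * (1 - d * z)) * (q ^ 2 * (z ^ 2 - q ^ 2))
        / (q ^ 2 * ((1 - z ^ 2) * ((1 - q ^ 2 * z ^ 2) * (z ^ 2 - q ^ 2)))) := by
    rw [div_mul_div_comm, div_eq_div_iff (mul_ne_zero c0 c1) hW]
    ring
  have hE4 : (z - a) * (z - b) / (z ^ 2 - 1) * ((z - c) * (z - d) / (z ^ 2 - q ^ 2))
      = (z - a) * (z - b) * ((z - c) * (z - d)) * (-(q ^ 2 * (1 - q ^ 2 * z ^ 2)))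
        / (q ^ 2 * ((1 - z ^ 2) * ((1 - q ^ 2 * z ^ 2) * (z ^ 2 - q ^ 2)))) := by
    rw [div_mul_div_comm, div_eq_div_iff (mul_ne_zero c0m czq) hW]
    ring
  have hK : (a * b * c * d * q⁻¹ ^ 2 - a * b - c * d * q⁻¹ ^ 2 + 1)
      = (a * b * c * d - a * b * q ^ 2 - c * d + q ^ 2)
          * ((1 - z ^ 2) * ((1 - q ^ 2 * z ^ 2) * (z ^ 2 - q ^ 2)))
        / (q ^ 2 * ((1 - z ^ 2) * ((1 - q ^ 2 * z ^ 2) * (z ^ 2 - q ^ 2)))) := by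
    rw [eq_div_iff hW]
    field_simp
  have hMid : (1 - a * z) * (1 - b * z) / (1 - z ^ 2)
        * ((q ^ 2 * z - c) * (q ^ 2 * z - d) / (q ^ 2 * (q ^ 2 * z ^ 2 - 1)))
      + (z - a) * (z - b) / (z ^ 2 - 1)
        * ((q ^ 2 - c * z) * (q ^ 2 - d * z) / (q ^ 2 * (q ^ 2 - z ^ 2)))
      = -((1 - a * z) * (1 - b * z) / (1 - z ^ 2)
            * ((1 - c * z) * (1 - d * z) / (1 - q ^ 2 * z ^ 2))
          + (z - a) * (z - b) / (z ^ 2 - 1) * ((z - c) * (z - d) / (z ^ 2 - q ^ 2)))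
        + (a * b * c * d * q⁻¹ ^ 2 - a * b - c * d * q⁻¹ ^ 2 + 1) := by
    rw [hE1, hE2, hE3, hE4, hK]
    ring
  -- assembling
  rw [Mop_closed, Mop_closed, Mop_closed, e1, e2, e3, e4]
  have step : (((a + b) + -(a * b) * z - z⁻¹)
        * (((q⁻¹ * (c + d) + -(q⁻¹ ^ 2 * c * d) * (q * z) - (q * z)⁻¹) * f (q ^ 2 * z)
            + (q * z - q⁻¹ * (c + d) - -(q⁻¹ ^ 2 * c * d) * (q * z)⁻¹) * f z)
          / (q * z - (q * z)⁻¹))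
      + (z - (a + b) - -(a * b) * z⁻¹)
        * (((q⁻¹ * (c + d) + -(q⁻¹ ^ 2 * c * d) * (q⁻¹ * z) - (q⁻¹ * z)⁻¹) * f z
            + (q⁻¹ * z - q⁻¹ * (c + d) - -(q⁻¹ ^ 2 * c * d) * (q⁻¹ * z)⁻¹) * f (q⁻¹ ^ 2 * z))
          / (q⁻¹ * z - (q⁻¹ * z)⁻¹))) / (z - z⁻¹)
      = (((a + b) + -(a * b) * z - z⁻¹) / (z - z⁻¹)
          * ((q⁻¹ * (c + d) + -(q⁻¹ ^ 2 * c * d) * (q * z) - (q * z)⁻¹) / (q * z - (q * z)⁻¹)))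
          * f (q ^ 2 * z)
        + (((a + b) + -(a * b) * z - z⁻¹) / (z - z⁻¹)
            * ((q * z - q⁻¹ * (c + d) - -(q⁻¹ ^ 2 * c * d) * (q * z)⁻¹) / (q * z - (q * z)⁻¹))
          + (z - (a + b) - -(a * b) * z⁻¹) / (z - z⁻¹)
            * ((q⁻¹ * (c + d) + -(q⁻¹ ^ 2 * c * d) * (q⁻¹ * z) - (q⁻¹ * z)⁻¹)
                / (q⁻¹ * z - (q⁻¹ * z)⁻¹))) * f z
        + ((z - (a + b) - -(a * b) * z⁻¹) / (z - z⁻¹)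
            * ((q⁻¹ * z - q⁻¹ * (c + d) - -(q⁻¹ ^ 2 * c * d) * (q⁻¹ * z)⁻¹)
                / (q⁻¹ * z - (q⁻¹ * z)⁻¹))) * f (q⁻¹ ^ 2 * z) := by
    ring
  rw [step, hR1, hR2, hR3, hR4, hR5, hR6, hMid, hA1, hA2]
  ring
end

section
/- Let q ∈ ℂ with q ≠ 0 and q² ≠ 1, and let α, β, γ, δ, ε, ζ ∈ ℂ. Then, pointwise on every f : ℂ → ℂ at every z ∈ ℂ with z ≠ 0 and q^{2k}z² ≠ 1 for k ∈ {−1,0,1}: (αY + βU + γV)(δY + εU + ζV)f(z) = βε·(U²f)(z) + γζ·(V²f)(z) + (αδ − βζq⁻¹ − γεq)·(Y²f)(z) + (αεq + βδ)·(U(Yf))(z) + (αζq⁻¹ + γδ)·(V(Yf))(z) + (βζ + γε)·f(z). In particular the most general quadratic expression in Y, U, V reduces to this form. -/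
/-!
Every operator `αY + βU + γV` is a two-point q-difference operator
`f ↦ a(z) f(qz) + b(z) f(q⁻¹z)` with explicit rational coefficients `a`, `b`.
A composite of two such operators is the three-point operator in `f(q²z)`, `f(z)`, `f(q⁻²z)`
whose coefficients are `a(z)c(qz)`, `a(z)d(qz) + b(z)c(q⁻¹z)` and `b(z)d(q⁻¹z)`.
Both sides of the reduction formula thus become three-point expressions, and comparing
coefficients leaves identities of rational functions in `q` and `z`.
-/

def twoPointOp {K : Type*} [Field K] (q : K) (a b : K → K) (f : K → K) (z : K) : K :=
  a z * f (q * z) + b z * f (q⁻¹ * z)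

theorem twoPointOp_twoPointOp {K : Type*} [Field K] {q : K} (hq : q ≠ 0)
    (a b c d f : K → K) (z : K) :
    twoPointOp q a b (twoPointOp q c d f) z =
      a z * c (q * z) * f (q ^ 2 * z)
        + (a z * d (q * z) + b z * c (q⁻¹ * z)) * f z
        + b z * d (q⁻¹ * z) * f (q⁻¹ ^ 2 * z) := by
  simp only [twoPointOp, inv_mul_cancel_left₀ hq, mul_inv_cancel_left₀ hq, ← mul_assoc, ← sq]
  ring

theorem Yop_eq_twoPointOp (q : ℂ) :
    Yop q = twoPointOp q (fun z => 1 / (z - z⁻¹)) (fun z => -1 / (z - z⁻¹)) := by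
  ext f z
  simp only [Yop, twoPointOp]
  ring

theorem Uop_eq_twoPointOp (q : ℂ) :
    Uop q = twoPointOp q (fun z => z / (z - z⁻¹)) (fun z => -z⁻¹ / (z - z⁻¹)) := by
  ext f z
  simp only [Uop, twoPointOp]
  ring

theorem Vop_eq_twoPointOp (q : ℂ) :
    Vop q = twoPointOp q (fun z => -z⁻¹ / (z - z⁻¹)) (fun z => z / (z - z⁻¹)) := by
  ext f z
  simp only [Vop, twoPointOp]
  ring

theorem Mop_eq_twoPointOp (q α β γ : ℂ) :
    Mop q α β γ = twoPointOp q (fun z => (α + β * z - γ * z⁻¹) / (z - z⁻¹))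
      (fun z => (-α - β * z⁻¹ + γ * z) / (z - z⁻¹)) := by
  ext f z
  simp only [Mop, Yop, Uop, Vop, twoPointOp]
  ring

theorem quadratic_reduction_general (q : ℂ) (hq : q ≠ 0)
    (α β γ δ ε ζ : ℂ) (f : ℂ → ℂ) (z : ℂ) (hz : z ≠ 0)
    (h0 : z ^ 2 ≠ 1) (h1 : q ^ 2 * z ^ 2 ≠ 1) (hm1 : q⁻¹ ^ 2 * z ^ 2 ≠ 1) :
    Mop q α β γ (Mop q δ ε ζ f) z
      = β * ε * Uop q (Uop q f) z + γ * ζ * Vop q (Vop q f) z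
        + (α * δ - β * ζ * q⁻¹ - γ * ε * q) * Yop q (Yop q f) z
        + (α * ε * q + β * δ) * Uop q (Yop q f) z
        + (α * ζ * q⁻¹ + γ * δ) * Vop q (Yop q f) z
        + (β * ζ + γ * ε) * f z := by
  have n0 : z ^ 2 - 1 ≠ 0 := sub_ne_zero.mpr h0
  have n1 : z ^ 2 * q ^ 2 - 1 ≠ 0 := by rw [mul_comm]; exact sub_ne_zero.mpr h1
  have n2 : z ^ 2 - q ^ 2 ≠ 0 := by
    rw [sub_ne_zero]; contrapose! hm1; field_simp; exact hm1
  simp only [Mop_eq_twoPointOp, Yop_eq_twoPointOp, Uop_eq_twoPointOp, Vop_eq_twoPointOp,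
    twoPointOp_twoPointOp hq, mul_inv, inv_inv]
  field_simp
  ring

/-- reduction of the general quadratic expression
`(αY + βU + γV)(δY + εU + ζV)` to the canonical form. -/
theorem quadratic_reduction (q : ℂ) (hq : q ≠ 0) (hq2 : q ^ 2 ≠ 1)
    (α β γ δ ε ζ : ℂ) (f : ℂ → ℂ) (z : ℂ) (hz : z ≠ 0)
    (h0 : z ^ 2 ≠ 1) (h1 : q ^ 2 * z ^ 2 ≠ 1) (hm1 : q⁻¹ ^ 2 * z ^ 2 ≠ 1) :
    Mop q α β γ (Mop q δ ε ζ f) z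
      = β * ε * Uop q (Uop q f) z + γ * ζ * Vop q (Vop q f) z
        + (α * δ - β * ζ * q⁻¹ - γ * ε * q) * Yop q (Yop q f) z
        + (α * ε * q + β * δ) * Uop q (Yop q f) z
        + (α * ζ * q⁻¹ + γ * δ) * Vop q (Yop q f) z
        + (β * ζ + γ * ε) * f z :=
  quadratic_reduction_general q hq α β γ δ ε ζ f z hz h0 h1 hm1
end

section
/- Let q ∈ ℂ with q ≠ 0 and q² ≠ 1, and let a, b, c, d ∈ ℂ. Set α = a+b, β = −ab, δ = q⁻¹(c+d), ε = −q⁻²cd, and the barred parameters ᾱ = q⁻¹(a+b), β̄ = −q⁻²ab, δ̄ = c+d, ε̄ = −cd. Then, pointwise on every f : ℂ → ℂ at every z ∈ ℂ with z ≠ 0 and q^{2k}z² ≠ 1 for k ∈ {−2,−1,0,1,2}: (αY + βU + V)(δY + εU + V)f(z) − (δ̄Y + ε̄U + V)(ᾱY + β̄U + V)f(z) = (cd − ab)(1 − q⁻²)·f(z). -/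
namespace AskeyWilson

noncomputable def upCoeff (a b z : ℂ) : ℂ := -((1 - a * z) * (1 - b * z)) / (z ^ 2 - 1)

noncomputable def downCoeff (a b z : ℂ) : ℂ := (z - a) * (z - b) / (z ^ 2 - 1)

noncomputable def midCoeff (q a b c d z : ℂ) : ℂ :=
  upCoeff a b z * downCoeff c d (q * z) + downCoeff a b z * upCoeff c d (q⁻¹ * z)

theorem Mop_eq (q a b : ℂ) (f : ℂ → ℂ) {z : ℂ} (hz : z ≠ 0) :
    Mop q (a + b) (-(a * b)) 1 f z =
      upCoeff a b z * f (q * z) + downCoeff a b z * f (q⁻¹ * z) := by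
  have hden : z - z⁻¹ = (z ^ 2 - 1) / z := by field_simp
  simp only [Mop, Yop, Uop, Vop, upCoeff, downCoeff, hden]
  field_simp
  ring

theorem Mop_Mop_eq {q : ℂ} (hq : q ≠ 0) (a b c d : ℂ) (f : ℂ → ℂ) {z : ℂ} (hz : z ≠ 0) :
    Mop q (a + b) (-(a * b)) 1 (Mop q (c + d) (-(c * d)) 1 f) z =
      upCoeff a b z * upCoeff c d (q * z) * f (q * (q * z)) + midCoeff q a b c d z * f z
        + downCoeff a b z * downCoeff c d (q⁻¹ * z) * f (q⁻¹ * (q⁻¹ * z)) := by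
  rw [Mop_eq q a b _ hz, Mop_eq q c d f (mul_ne_zero hq hz),
    Mop_eq q c d f (mul_ne_zero (inv_ne_zero hq) hz), inv_mul_cancel_left₀ hq,
    mul_inv_cancel_left₀ hq, midCoeff]
  ring

section Rescaled

variable {q : ℂ} (hq : q ≠ 0) (a b z : ℂ)
include hq

theorem upCoeff_inv_mul_mul :
    upCoeff (q⁻¹ * a) (q⁻¹ * b) (q * z) =
      -((1 - a * z) * (1 - b * z)) / (q ^ 2 * z ^ 2 - 1) := by
  simp only [upCoeff]
  field_simp

theorem upCoeff_inv_mul_inv_mul :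
    upCoeff (q⁻¹ * a) (q⁻¹ * b) (q⁻¹ * z) =
      -((q ^ 2 - a * z) * (q ^ 2 - b * z)) / (q ^ 2 * (z ^ 2 - q ^ 2)) := by
  simp only [upCoeff]
  field_simp

theorem downCoeff_inv_mul_mul :
    downCoeff (q⁻¹ * a) (q⁻¹ * b) (q * z) =
      (q ^ 2 * z - a) * (q ^ 2 * z - b) / (q ^ 2 * (q ^ 2 * z ^ 2 - 1)) := by
  simp only [downCoeff]
  field_simp

theorem downCoeff_inv_mul_inv_mul :
    downCoeff (q⁻¹ * a) (q⁻¹ * b) (q⁻¹ * z) = (z - a) * (z - b) / (z ^ 2 - q ^ 2) := by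
  simp only [downCoeff]
  field_simp

end Rescaled

theorem upCoeff_mul_upCoeff_inv_mul_comm {q : ℂ} (hq : q ≠ 0) (a b c d z : ℂ) :
    upCoeff a b z * upCoeff (q⁻¹ * c) (q⁻¹ * d) (q * z) =
      upCoeff c d z * upCoeff (q⁻¹ * a) (q⁻¹ * b) (q * z) := by
  rw [upCoeff_inv_mul_mul hq, upCoeff_inv_mul_mul hq, upCoeff, upCoeff]
  ring

theorem downCoeff_mul_downCoeff_inv_mul_comm {q : ℂ} (hq : q ≠ 0) (a b c d z : ℂ) :
    downCoeff a b z * downCoeff (q⁻¹ * c) (q⁻¹ * d) (q⁻¹ * z) =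
      downCoeff c d z * downCoeff (q⁻¹ * a) (q⁻¹ * b) (q⁻¹ * z) := by
  rw [downCoeff_inv_mul_inv_mul hq, downCoeff_inv_mul_inv_mul hq, downCoeff, downCoeff]
  ring

theorem midCoeff_inv_mul_sub_midCoeff_inv_mul {q : ℂ} (hq : q ≠ 0) (a b c d : ℂ) {z : ℂ}
    (h0 : z ^ 2 ≠ 1) (h1 : q ^ 2 * z ^ 2 ≠ 1) (hm1 : q⁻¹ ^ 2 * z ^ 2 ≠ 1) :
    midCoeff q a b (q⁻¹ * c) (q⁻¹ * d) z - midCoeff q c d (q⁻¹ * a) (q⁻¹ * b) z =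
      (c * d - a * b) * (1 - q⁻¹ ^ 2) := by
  have hden₀ : z ^ 2 - 1 ≠ 0 := sub_ne_zero.mpr h0
  -- `field_simp` normalizes `q ^ 2 * z ^ 2` to `z ^ 2 * q ^ 2`
  have hdenMul : z ^ 2 * q ^ 2 - 1 ≠ 0 := by rw [mul_comm]; exact sub_ne_zero.mpr h1
  have hdenInv : z ^ 2 - q ^ 2 ≠ 0 := by
    rw [sub_ne_zero]
    rintro h
    apply hm1
    rw [h]
    field_simp
  rw [midCoeff, midCoeff, upCoeff_inv_mul_inv_mul hq, upCoeff_inv_mul_inv_mul hq,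
    downCoeff_inv_mul_mul hq, downCoeff_inv_mul_mul hq, upCoeff, upCoeff, downCoeff, downCoeff]
  field_simp
  ring

end AskeyWilson

open AskeyWilson in
theorem factorization_difference_general (q : ℂ) (hq : q ≠ 0)
    (a b c d : ℂ) (α β δ ε αb βb δb εb : ℂ)
    (hα : α = a + b) (hβ : β = -(a * b))
    (hδ : δ = q⁻¹ * (c + d)) (hε : ε = -(q⁻¹ ^ 2 * c * d))
    (hαb : αb = q⁻¹ * (a + b)) (hβb : βb = -(q⁻¹ ^ 2 * a * b))
    (hδb : δb = c + d) (hεb : εb = -(c * d))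
    (f : ℂ → ℂ) (z : ℂ) (hz : z ≠ 0)
    (h0 : z ^ 2 ≠ 1) (h1 : q ^ 2 * z ^ 2 ≠ 1) (hm1 : q⁻¹ ^ 2 * z ^ 2 ≠ 1) :
    Mop q α β 1 (Mop q δ ε 1 f) z - Mop q δb εb 1 (Mop q αb βb 1 f) z
      = (c * d - a * b) * (1 - q⁻¹ ^ 2) * f z := by
  have hδ' : δ = q⁻¹ * c + q⁻¹ * d := by rw [hδ, mul_add]
  have hε' : ε = -(q⁻¹ * c * (q⁻¹ * d)) := by rw [hε]; ring
  have hαb' : αb = q⁻¹ * a + q⁻¹ * b := by rw [hαb, mul_add]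
  have hβb' : βb = -(q⁻¹ * a * (q⁻¹ * b)) := by rw [hβb]; ring
  rw [hα, hβ, hδ', hε', hαb', hβb', hδb, hεb, Mop_Mop_eq hq _ _ _ _ _ hz,
    Mop_Mop_eq hq _ _ _ _ _ hz]
  linear_combination f (q * (q * z)) * upCoeff_mul_upCoeff_inv_mul_comm hq a b c d z
    + f z * midCoeff_inv_mul_sub_midCoeff_inv_mul hq a b c d h0 h1 hm1
    + f (q⁻¹ * (q⁻¹ * z)) * downCoeff_mul_downCoeff_inv_mul_comm hq a b c d z

/-- the two factorizations of the Askey–Wilson operator differ by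
the constant `(cd - ab)(1 - q⁻²)` times the identity. -/
theorem factorization_difference (q : ℂ) (hq : q ≠ 0) (hq2 : q ^ 2 ≠ 1)
    (a b c d : ℂ) (α β δ ε αb βb δb εb : ℂ)
    (hα : α = a + b) (hβ : β = -(a * b))
    (hδ : δ = q⁻¹ * (c + d)) (hε : ε = -(q⁻¹ ^ 2 * c * d))
    (hαb : αb = q⁻¹ * (a + b)) (hβb : βb = -(q⁻¹ ^ 2 * a * b))
    (hδb : δb = c + d) (hεb : εb = -(c * d))
    (f : ℂ → ℂ) (z : ℂ) (hz : z ≠ 0)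
    (h0 : z ^ 2 ≠ 1) (h1 : q ^ 2 * z ^ 2 ≠ 1) (hm1 : q⁻¹ ^ 2 * z ^ 2 ≠ 1)
    (h2 : (q ^ 2) ^ 2 * z ^ 2 ≠ 1) (hm2 : (q⁻¹ ^ 2) ^ 2 * z ^ 2 ≠ 1) :
    Mop q α β 1 (Mop q δ ε 1 f) z - Mop q δb εb 1 (Mop q αb βb 1 f) z
      = (c * d - a * b) * (1 - q⁻¹ ^ 2) * f z :=
  factorization_difference_general q hq a b c d α β δ ε αb βb δb εb hα hβ hδ hε hαb hβb hδb hεb f z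
    hz h0 h1 hm1
end

section
/- Let q ∈ ℂ with q ≠ 0 and q² ≠ 1, and let X denote multiplication by x = z + z⁻¹, i.e. (Xf)(z) = (z + z⁻¹)f(z). Then, pointwise on every f : ℂ → ℂ at every z ∈ ℂ with z ≠ 0 and z² ≠ 1: (U(Xf))(z) − q·(X(Uf))(z) = −(q − q⁻¹)·(Yf)(z) and (X(Vf))(z) − q·(V(Xf))(z) = q(q − q⁻¹)·(Yf)(z). -/
/-- `X` = multiplication by `x = z + z⁻¹` -/
noncomputable def Xop (f : ℂ → ℂ) : ℂ → ℂ := fun z => (z + z⁻¹) * f z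

/-- the relations `Ux - qxU = -(q - q⁻¹)Y` and
`xV - qVx = q(q - q⁻¹)Y`, pointwise. -/
theorem x_relations (q : ℂ) (hq : q ≠ 0) (hq2 : q ^ 2 ≠ 1)
    (f : ℂ → ℂ) (z : ℂ) (hz : z ≠ 0) (h0 : z ^ 2 ≠ 1) :
    (Uop q (Xop f) z - q * Xop (Uop q f) z = -((q - q⁻¹) * Yop q f z)) ∧
    (Xop (Vop q f) z - q * Vop q (Xop f) z = q * (q - q⁻¹) * Yop q f z) := by
  have hw : z * z⁻¹ = 1 := mul_inv_cancel₀ hz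
  have hp : q * q⁻¹ = 1 := mul_inv_cancel₀ hq
  constructor
  · simp only [Uop, Xop, Yop, mul_inv, inv_inv]
    linear_combination (((q⁻¹ - q) * f (q * z) + (q - q⁻¹) * f (q⁻¹ * z)) * hw) / (z - z⁻¹)
  · simp only [Vop, Xop, Yop, mul_inv, inv_inv]
    linear_combination ((q ^ 2 - 1) * (f (q * z) - f (q⁻¹ * z)) * hw +
      (z⁻¹ ^ 2 * f (q * z) - z ^ 2 * f (q⁻¹ * z) + f (q * z) - f (q⁻¹ * z)) * hp) / (z - z⁻¹)
end

section
/- Let q ∈ ℂ with q ≠ 0 and q² ≠ 1, and let A₁, A₂ : ℂ∖{0} → ℂ. Consider the operator (Sf)(z) = A₁(z)f(qz) + A₂(z)f(q⁻¹z) and the Askey–Wilson monomials χₙ(z) = zⁿ + z⁻ⁿ. Then the following are equivalent: (i) for every n ∈ ℕ there is a polynomial Pₙ of degree at most n+1 such that A₁(z)(qⁿzⁿ + q⁻ⁿz⁻ⁿ) + A₂(z)(q⁻ⁿzⁿ + qⁿz⁻ⁿ) = Pₙ(z + z⁻¹) for all z ≠ 0 with z² ≠ 1; (ii) there exist a₀₀,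 a₀₁, a₁₀, a₁₁, a₁₂ ∈ ℂ such that for all z ≠ 0 with z² ≠ 1, A₁(z) = π₄(z)/(z(1 − z²)(1 − q²)) where π₄(z) = (a₁₂q − a₀₁)z⁴ + (qa₁₁ − a₀₀)z³ − ((1 + q²)a₀₁ − qa₁₀)z² + q(a₁₁ − qa₀₀)z + q(a₁₂ − qa₀₁), and A₂(z) = A₁(z⁻¹). Thus the S-Heun operators on the Askey–Wilson grid form a five-parameter family. -/
open Polynomial

noncomputable def sB (c₀ c₁ c₂ c₃ c₄ w : ℂ) : ℂ :=
  (c₄ * w ^ 4 + c₃ * w ^ 3 + c₂ * w ^ 2 + c₁ * w + c₀) / (w * (1 - w ^ 2))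

lemma one_sub_sq_ne (z : ℂ) (hz2 : z ^ 2 ≠ 1) : (1 : ℂ) - z ^ 2 ≠ 0 :=
  sub_ne_zero.mpr fun h => hz2 h.symm

lemma sq_sub_one_ne (z : ℂ) (hz2 : z ^ 2 ≠ 1) : z ^ 2 - (1 : ℂ) ≠ 0 :=
  sub_ne_zero.mpr hz2

lemma inv_sq_ne_one (z : ℂ) (hz2 : z ^ 2 ≠ 1) : (z⁻¹) ^ 2 ≠ 1 := fun h => by
  rw [inv_pow] at h
  exact hz2 (inv_eq_one.mp h)

lemma one_sub_inv_sq_ne (z : ℂ) (hz2 : z ^ 2 ≠ 1) : (1 : ℂ) - (z⁻¹) ^ 2 ≠ 0 :=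
  one_sub_sq_ne _ (inv_sq_ne_one z hz2)

lemma sB_inv (c₀ c₁ c₂ c₃ c₄ z : ℂ) (hz : z ≠ 0) (hz2 : z ^ 2 ≠ 1) :
    sB c₀ c₁ c₂ c₃ c₄ z⁻¹
      = (c₀ * z ^ 4 + c₁ * z ^ 3 + c₂ * z ^ 2 + c₃ * z + c₄) / (z * (z ^ 2 - 1)) := by
  have hz1 : z * z⁻¹ = 1 := mul_inv_cancel₀ hz
  rw [sB, div_eq_div_iff (mul_ne_zero (inv_ne_zero hz) (one_sub_inv_sq_ne z hz2))
    (mul_ne_zero hz (sq_sub_one_ne z hz2))]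
  linear_combination (z⁻¹ * c₄ + (-1 : ℂ) * z⁻¹ ^ 3 * c₄ + z * c₀ + z * z⁻¹ * c₃ + z * z⁻¹ * c₁ +
    z * z⁻¹ ^ 2 * c₄ + z * z⁻¹ ^ 2 * c₂ + z ^ 2 * z⁻¹ * c₂ + z ^ 2 * z⁻¹ * c₀ +
    z ^ 2 * z⁻¹ ^ 2 * c₃ + z ^ 2 * z⁻¹ ^ 2 * c₁ + z ^ 2 * z⁻¹ ^ 3 * c₄ + (-1 : ℂ) * z ^ 3 * c₀ +
    z ^ 3 * z⁻¹ ^ 2 * c₀) * hz1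

def SHeunStmt (q c₀ c₁ c₂ c₃ c₄ : ℂ) (n : ℕ) : Prop :=
  ∃ P Q : Polynomial ℂ, P.degree ≤ (n + 1 : ℕ) ∧ Q.degree ≤ (n + 2 : ℕ) ∧
    ∀ z : ℂ, z ≠ 0 → z ^ 2 ≠ 1 →
      (sB c₀ c₁ c₂ c₃ c₄ z * (q ^ n * z ^ n + q⁻¹ ^ n * z⁻¹ ^ n)
          + sB c₀ c₁ c₂ c₃ c₄ z⁻¹ * (q⁻¹ ^ n * z ^ n + q ^ n * z⁻¹ ^ n)
        = P.eval (z + z⁻¹))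
      ∧ ((z - z⁻¹) * (sB c₀ c₁ c₂ c₃ c₄ z * (q ^ n * z ^ n + q⁻¹ ^ n * z⁻¹ ^ n)
          - sB c₀ c₁ c₂ c₃ c₄ z⁻¹ * (q⁻¹ ^ n * z ^ n + q ^ n * z⁻¹ ^ n))
        = Q.eval (z + z⁻¹))

lemma sHeun_base0 (q : ℂ) (c₀ c₁ c₂ c₃ c₄ : ℂ) : SHeunStmt q c₀ c₁ c₂ c₃ c₄ 0 := by
  refine ⟨C (-2 * (c₄ - c₀)) * X + C (-2 * (c₃ - c₁)),
    C (-2 * (c₄ + c₀)) * (X ^ 2 - C 2) + C (-2 * (c₃ + c₁)) * X + C (-4 * c₂), ?_, ?_, ?_⟩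
  · compute_degree <;> norm_num
  · compute_degree <;> norm_num
  intro z hz hz2
  have hz1 : z * z⁻¹ = 1 := mul_inv_cancel₀ hz
  have hD1 : z * (1 - z ^ 2) ≠ 0 := mul_ne_zero hz (one_sub_sq_ne z hz2)
  have hD2 : z * (z ^ 2 - 1) ≠ 0 := mul_ne_zero hz (sq_sub_one_ne z hz2)
  constructor
  · rw [sB_inv c₀ c₁ c₂ c₃ c₄ z hz hz2]
    unfold sB
    simp only [eval_add, eval_sub, eval_mul, eval_pow, eval_C, eval_X]
    rw [div_mul_eq_mul_div, div_mul_eq_mul_div, div_add_div _ _ hD1 hD2,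
      div_eq_iff (mul_ne_zero hD1 hD2)]
    linear_combination ((-2 : ℂ) * z * c₄ + (2 : ℂ) * z * c₀ + (4 : ℂ) * z ^ 3 * c₄ +
      (-4 : ℂ) * z ^ 3 * c₀ + (-2 : ℂ) * z ^ 5 * c₄ + (2 : ℂ) * z ^ 5 * c₀) * hz1
  · rw [sB_inv c₀ c₁ c₂ c₃ c₄ z hz hz2]
    unfold sB
    simp only [eval_add, eval_sub, eval_mul, eval_pow, eval_C, eval_X]
    rw [div_mul_eq_mul_div, div_mul_eq_mul_div, div_sub_div _ _ hD1 hD2, ← mul_div_assoc,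
      div_eq_iff (mul_ne_zero hD1 hD2)]
    linear_combination ((-2 : ℂ) * z * z⁻¹ * c₄ + (-2 : ℂ) * z * z⁻¹ * c₀ + (-2 : ℂ) * z ^ 2 * c₄ +
      (4 : ℂ) * z ^ 2 * c₂ + (-2 : ℂ) * z ^ 2 * c₀ + (4 : ℂ) * z ^ 3 * c₃ + (4 : ℂ) * z ^ 3 * c₁ +
      (4 : ℂ) * z ^ 3 * z⁻¹ * c₄ + (4 : ℂ) * z ^ 3 * z⁻¹ * c₀ + (8 : ℂ) * z ^ 4 * c₄ +
      (-4 : ℂ) * z ^ 4 * c₂ + (8 : ℂ) * z ^ 4 * c₀ + (-4 : ℂ) * z ^ 5 * c₃ +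
      (-4 : ℂ) * z ^ 5 * c₁ + (-2 : ℂ) * z ^ 5 * z⁻¹ * c₄ + (-2 : ℂ) * z ^ 5 * z⁻¹ * c₀ +
      (-6 : ℂ) * z ^ 6 * c₄ + (-6 : ℂ) * z ^ 6 * c₀) * hz1

lemma sHeun_base1 (q : ℂ) (hq : q ≠ 0) (c₀ c₁ c₂ c₃ c₄ : ℂ) :
    SHeunStmt q c₀ c₁ c₂ c₃ c₄ 1 := by
  refine ⟨C (-(q * c₄ - q⁻¹ * c₀)) * (X ^ 2 - C 2) + C (-(q * c₃ - q⁻¹ * c₁)) * X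
      + C (-((q - q⁻¹) * c₂ + (q + q⁻¹) * (c₄ - c₀))),
    C (-(q * c₄ + q⁻¹ * c₀)) * (X ^ 3 - C 3 * X) + C (-(q * c₃ + q⁻¹ * c₁)) * (X ^ 2 - C 2)
      + C (-((q + q⁻¹) * c₂ + q * c₀ + q⁻¹ * c₄)) * X + C (-(2 * (q * c₁ + q⁻¹ * c₃))),
    ?_, ?_, ?_⟩
  · compute_degree <;> norm_num
  · compute_degree <;> norm_num
  intro z hz hz2
  have hz1 : z * z⁻¹ = 1 := mul_inv_cancel₀ hz
  have hq1 : q * q⁻¹ = 1 := mul_inv_cancel₀ hq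
  have hD1 : z * (1 - z ^ 2) ≠ 0 := mul_ne_zero hz (one_sub_sq_ne z hz2)
  have hD2 : z * (z ^ 2 - 1) ≠ 0 := mul_ne_zero hz (sq_sub_one_ne z hz2)
  constructor
  · rw [sB_inv c₀ c₁ c₂ c₃ c₄ z hz hz2]
    unfold sB
    simp only [eval_add, eval_sub, eval_mul, eval_pow, eval_C, eval_X]
    rw [div_mul_eq_mul_div, div_mul_eq_mul_div, div_add_div _ _ hD1 hD2,
      div_eq_iff (mul_ne_zero hD1 hD2)]
    linear_combination (z * z⁻¹ * q⁻¹ * c₀ + (-1 : ℂ) * z * z⁻¹ * q * c₄ +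
      (-1 : ℂ) * z ^ 2 * q⁻¹ * c₂ + z ^ 2 * q⁻¹ * c₀ + (-1 : ℂ) * z ^ 2 * q * c₄ +
      z ^ 2 * q * c₂ + (-1 : ℂ) * z ^ 3 * q⁻¹ * c₃ + (-1 : ℂ) * z ^ 3 * q⁻¹ * c₁ +
      z ^ 3 * q * c₃ + z ^ 3 * q * c₁ + (-2 : ℂ) * z ^ 3 * z⁻¹ * q⁻¹ * c₀ +
      (2 : ℂ) * z ^ 3 * z⁻¹ * q * c₄ + (-1 : ℂ) * z ^ 4 * q⁻¹ * c₄ + z ^ 4 * q⁻¹ * c₂ +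
      (-3 : ℂ) * z ^ 4 * q⁻¹ * c₀ + (3 : ℂ) * z ^ 4 * q * c₄ + (-1 : ℂ) * z ^ 4 * q * c₂ +
      z ^ 4 * q * c₀ + z ^ 5 * q⁻¹ * c₃ + z ^ 5 * q⁻¹ * c₁ + (-1 : ℂ) * z ^ 5 * q * c₃ +
      (-1 : ℂ) * z ^ 5 * q * c₁ + z ^ 5 * z⁻¹ * q⁻¹ * c₀ + (-1 : ℂ) * z ^ 5 * z⁻¹ * q * c₄ +
      z ^ 6 * q⁻¹ * c₄ + (2 : ℂ) * z ^ 6 * q⁻¹ * c₀ + (-2 : ℂ) * z ^ 6 * q * c₄ +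
      (-1 : ℂ) * z ^ 6 * q * c₀) * hz1
  · rw [sB_inv c₀ c₁ c₂ c₃ c₄ z hz hz2]
    unfold sB
    simp only [eval_add, eval_sub, eval_mul, eval_pow, eval_C, eval_X]
    rw [div_mul_eq_mul_div, div_mul_eq_mul_div, div_sub_div _ _ hD1 hD2, ← mul_div_assoc,
      div_eq_iff (mul_ne_zero hD1 hD2)]
    linear_combination ((-1 : ℂ) * z * z⁻¹ ^ 2 * q⁻¹ * c₀ + (-1 : ℂ) * z * z⁻¹ ^ 2 * q * c₄ +
      (2 : ℂ) * z ^ 2 * q⁻¹ * c₃ + (-2 : ℂ) * z ^ 2 * q⁻¹ * c₁ + (-2 : ℂ) * z ^ 2 * q * c₃ +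
      (2 : ℂ) * z ^ 2 * q * c₁ + z ^ 2 * z⁻¹ * q⁻¹ * c₂ + (-2 : ℂ) * z ^ 2 * z⁻¹ * q⁻¹ * c₀ +
      (-2 : ℂ) * z ^ 2 * z⁻¹ * q * c₄ + z ^ 2 * z⁻¹ * q * c₂ + (2 : ℂ) * z ^ 3 * q⁻¹ * c₄ +
      z ^ 3 * q⁻¹ * c₂ + (-3 : ℂ) * z ^ 3 * q⁻¹ * c₀ + (-3 : ℂ) * z ^ 3 * q * c₄ +
      z ^ 3 * q * c₂ + (2 : ℂ) * z ^ 3 * q * c₀ + z ^ 3 * z⁻¹ * q⁻¹ * c₃ +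
      z ^ 3 * z⁻¹ * q⁻¹ * c₁ + z ^ 3 * z⁻¹ * q * c₃ + z ^ 3 * z⁻¹ * q * c₁ +
      (2 : ℂ) * z ^ 3 * z⁻¹ ^ 2 * q⁻¹ * c₀ + (2 : ℂ) * z ^ 3 * z⁻¹ ^ 2 * q * c₄ +
      (-3 : ℂ) * z ^ 4 * q⁻¹ * c₃ + (5 : ℂ) * z ^ 4 * q⁻¹ * c₁ + (5 : ℂ) * z ^ 4 * q * c₃ +
      (-3 : ℂ) * z ^ 4 * q * c₁ + z ^ 4 * z⁻¹ * q⁻¹ * c₄ + (-1 : ℂ) * z ^ 4 * z⁻¹ * q⁻¹ * c₂ +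
      (5 : ℂ) * z ^ 4 * z⁻¹ * q⁻¹ * c₀ + (5 : ℂ) * z ^ 4 * z⁻¹ * q * c₄ +
      (-1 : ℂ) * z ^ 4 * z⁻¹ * q * c₂ + z ^ 4 * z⁻¹ * q * c₀ + (-3 : ℂ) * z ^ 5 * q⁻¹ * c₄ +
      (-1 : ℂ) * z ^ 5 * q⁻¹ * c₂ + (7 : ℂ) * z ^ 5 * q⁻¹ * c₀ + (7 : ℂ) * z ^ 5 * q * c₄ +
      (-1 : ℂ) * z ^ 5 * q * c₂ + (-3 : ℂ) * z ^ 5 * q * c₀ + (-1 : ℂ) * z ^ 5 * z⁻¹ * q⁻¹ * c₃ +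
      (-1 : ℂ) * z ^ 5 * z⁻¹ * q⁻¹ * c₁ + (-1 : ℂ) * z ^ 5 * z⁻¹ * q * c₃ +
      (-1 : ℂ) * z ^ 5 * z⁻¹ * q * c₁ + (-1 : ℂ) * z ^ 5 * z⁻¹ ^ 2 * q⁻¹ * c₀ +
      (-1 : ℂ) * z ^ 5 * z⁻¹ ^ 2 * q * c₄ + z ^ 6 * q⁻¹ * c₃ + (-3 : ℂ) * z ^ 6 * q⁻¹ * c₁ +
      (-3 : ℂ) * z ^ 6 * q * c₃ + z ^ 6 * q * c₁ + (-1 : ℂ) * z ^ 6 * z⁻¹ * q⁻¹ * c₄ +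
      (-3 : ℂ) * z ^ 6 * z⁻¹ * q⁻¹ * c₀ + (-3 : ℂ) * z ^ 6 * z⁻¹ * q * c₄ +
      (-1 : ℂ) * z ^ 6 * z⁻¹ * q * c₀ + z ^ 7 * q⁻¹ * c₄ + (-4 : ℂ) * z ^ 7 * q⁻¹ * c₀ +
      (-4 : ℂ) * z ^ 7 * q * c₄ + z ^ 7 * q * c₀) * hz1

lemma degHelp_C_mul {p : Polynomial ℂ} {k : ℕ} (h : p.degree ≤ (k : WithBot ℕ)) (a : ℂ) :
    (C a * p).degree ≤ (k : WithBot ℕ) := by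
  refine le_trans (degree_mul_le _ _) ?_
  simpa using add_le_add degree_C_le h

lemma degHelp_X_mul {p : Polynomial ℂ} {k : ℕ} (h : p.degree ≤ (k : WithBot ℕ)) :
    (X * p).degree ≤ ((k + 1 : ℕ) : WithBot ℕ) := by
  refine le_trans (degree_mul_le _ _) ?_
  calc degree (X : Polynomial ℂ) + p.degree ≤ 1 + (k : WithBot ℕ) := add_le_add degree_X_le h
    _ = ((k + 1 : ℕ) : WithBot ℕ) := by push_cast; ring

lemma degHelp_sq_mul {p : Polynomial ℂ} {k : ℕ} (h : p.degree ≤ (k : WithBot ℕ)) :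
    ((X ^ 2 - C 4) * p).degree ≤ ((k + 2 : ℕ) : WithBot ℕ) := by
  refine le_trans (degree_mul_le _ _) ?_
  calc degree (X ^ 2 - C (4:ℂ)) + p.degree ≤ 2 + (k : WithBot ℕ) := by
        refine add_le_add ?_ h
        compute_degree
    _ = ((k + 2 : ℕ) : WithBot ℕ) := by push_cast; ring

lemma sHeun_step (q : ℂ) (hq : q ≠ 0) (c₀ c₁ c₂ c₃ c₄ : ℂ) (n : ℕ)
    (ha : SHeunStmt q c₀ c₁ c₂ c₃ c₄ n) (hb : SHeunStmt q c₀ c₁ c₂ c₃ c₄ (n + 1)) :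
    SHeunStmt q c₀ c₁ c₂ c₃ c₄ (n + 2) := by
  obtain ⟨Pa, Qa, hdPa, hdQa, hha⟩ := ha
  obtain ⟨Pb, Qb, hdPb, hdQb, hhb⟩ := hb
  refine ⟨C ((q + q⁻¹) / 2) * (X * Pb) + C ((q - q⁻¹) / 2) * Qb - Pa,
    C ((q + q⁻¹) / 2) * (X * Qb) + C ((q - q⁻¹) / 2) * ((X ^ 2 - C 4) * Pb) - Qa, ?_, ?_, ?_⟩
  · refine le_trans (degree_sub_le _ _) (max_le (le_trans (degree_add_le _ _) (max_le ?_ ?_)) ?_)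
    · exact degHelp_C_mul (degHelp_X_mul hdPb) _
    · exact degHelp_C_mul hdQb _
    · exact le_trans hdPa (by exact_mod_cast (show n + 1 ≤ n + 2 + 1 by omega))
  · refine le_trans (degree_sub_le _ _) (max_le (le_trans (degree_add_le _ _) (max_le ?_ ?_)) ?_)
    · exact degHelp_C_mul (degHelp_X_mul hdQb) _
    · exact degHelp_C_mul (degHelp_sq_mul hdPb) _
    · exact le_trans hdQa (by exact_mod_cast (show n + 2 ≤ n + 2 + 2 by omega))
  intro z hz hz2
  obtain ⟨e1a, e2a⟩ := hha z hz hz2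
  obtain ⟨e1b, e2b⟩ := hhb z hz hz2
  have hz1 : z * z⁻¹ = 1 := mul_inv_cancel₀ hz
  have hq1 : q * q⁻¹ = 1 := mul_inv_cancel₀ hq
  have h3 : q * q⁻¹ * (z * z⁻¹) = 1 := by rw [hz1, hq1, one_mul]
  have hp : q ^ (n + 2) * z ^ (n + 2) + q⁻¹ ^ (n + 2) * z⁻¹ ^ (n + 2)
      = (q * z + q⁻¹ * z⁻¹) * (q ^ (n + 1) * z ^ (n + 1) + q⁻¹ ^ (n + 1) * z⁻¹ ^ (n + 1))
        - (q ^ n * z ^ n + q⁻¹ ^ n * z⁻¹ ^ n) := by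
    linear_combination (-(q ^ n * z ^ n + q⁻¹ ^ n * z⁻¹ ^ n)) * h3
  have hm : q⁻¹ ^ (n + 2) * z ^ (n + 2) + q ^ (n + 2) * z⁻¹ ^ (n + 2)
      = (q⁻¹ * z + q * z⁻¹) * (q⁻¹ ^ (n + 1) * z ^ (n + 1) + q ^ (n + 1) * z⁻¹ ^ (n + 1))
        - (q⁻¹ ^ n * z ^ n + q ^ n * z⁻¹ ^ n) := by
    linear_combination (-(q⁻¹ ^ n * z ^ n + q ^ n * z⁻¹ ^ n)) * h3
  constructor
  · simp only [eval_add, eval_sub, eval_mul, eval_pow, eval_C, eval_X]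
    linear_combination (sB c₀ c₁ c₂ c₃ c₄ z) * hp + (sB c₀ c₁ c₂ c₃ c₄ z⁻¹) * hm
      + ((q + q⁻¹) / 2 * (z + z⁻¹)) * e1b + ((q - q⁻¹) / 2) * e2b - e1a
  · simp only [eval_add, eval_sub, eval_mul, eval_pow, eval_C, eval_X]
    linear_combination ((z - z⁻¹) * sB c₀ c₁ c₂ c₃ c₄ z) * hp
      - ((z - z⁻¹) * sB c₀ c₁ c₂ c₃ c₄ z⁻¹) * hm
      + ((q + q⁻¹) / 2 * (z + z⁻¹)) * e2b + ((q - q⁻¹) / 2 * ((z + z⁻¹) ^ 2 - 4)) * e1b - e2a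
      - ((q - q⁻¹) * 2 * (sB c₀ c₁ c₂ c₃ c₄ z * (q ^ (n + 1) * z ^ (n + 1)
          + q⁻¹ ^ (n + 1) * z⁻¹ ^ (n + 1)) + sB c₀ c₁ c₂ c₃ c₄ z⁻¹ * (q⁻¹ ^ (n + 1) * z ^ (n + 1)
          + q ^ (n + 1) * z⁻¹ ^ (n + 1)))) * hz1

lemma sHeun_aux (q : ℂ) (hq : q ≠ 0) (c₀ c₁ c₂ c₃ c₄ : ℂ) (n : ℕ) :
    SHeunStmt q c₀ c₁ c₂ c₃ c₄ n := by
  have key : ∀ m : ℕ, SHeunStmt q c₀ c₁ c₂ c₃ c₄ m ∧ SHeunStmt q c₀ c₁ c₂ c₃ c₄ (m + 1) := by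
    intro m
    induction m with
    | zero => exact ⟨sHeun_base0 q c₀ c₁ c₂ c₃ c₄, sHeun_base1 q hq c₀ c₁ c₂ c₃ c₄⟩
    | succ k ih => exact ⟨ih.2, sHeun_step q hq c₀ c₁ c₂ c₃ c₄ k ih.1 ih.2⟩
  exact (key n).1

lemma formula_eq (q w a₀₀ a₀₁ a₁₀ a₁₁ a₁₂ : ℂ) (hq2 : q ^ 2 ≠ 1) (hw : w ≠ 0)
    (hw2 : w ^ 2 ≠ 1) :
    ((a₁₂ * q - a₀₁) * w ^ 4 + (q * a₁₁ - a₀₀) * w ^ 3 - ((1 + q ^ 2) * a₀₁ - q * a₁₀) * w ^ 2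
        + q * (a₁₁ - q * a₀₀) * w + q * (a₁₂ - q * a₀₁)) / (w * (1 - w ^ 2) * (1 - q ^ 2))
      = sB ((q * a₁₂ - q ^ 2 * a₀₁) / (1 - q ^ 2)) ((q * a₁₁ - q ^ 2 * a₀₀) / (1 - q ^ 2))
          ((q * a₁₀ - (1 + q ^ 2) * a₀₁) / (1 - q ^ 2)) ((q * a₁₁ - a₀₀) / (1 - q ^ 2))
          ((a₁₂ * q - a₀₁) / (1 - q ^ 2)) w := by
  have h2 : (1 : ℂ) - q ^ 2 ≠ 0 := one_sub_sq_ne q hq2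
  have hg : (1 - q ^ 2) * (1 - q ^ 2)⁻¹ = 1 := mul_inv_cancel₀ h2
  rw [sB, div_eq_div_iff (mul_ne_zero (mul_ne_zero hw (one_sub_sq_ne w hw2)) h2)
    (mul_ne_zero hw (one_sub_sq_ne w hw2))]
  linear_combination (-(w * (1 - w ^ 2) * ((a₁₂ * q - a₀₁) * w ^ 4 + (q * a₁₁ - a₀₀) * w ^ 3
    + (q * a₁₀ - (1 + q ^ 2) * a₀₁) * w ^ 2 + (q * a₁₁ - q ^ 2 * a₀₀) * w
    + (q * a₁₂ - q ^ 2 * a₀₁)))) * hg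

/-- characterization of the S-Heun operators on the Askey–Wilson
grid: the operator `S = A₁(z)T₊ + A₂(z)T₋` raises by at most one the degree of
polynomials in `x = z + z⁻¹` if and only if `A₁` is of the stated rational form
with five free parameters and `A₂(z) = A₁(z⁻¹)`. -/
theorem sHeun_characterization (q : ℂ) (hq : q ≠ 0) (hq2 : q ^ 2 ≠ 1)
    (A₁ A₂ : ℂ → ℂ) :
    (∀ n : ℕ, ∃ P : Polynomial ℂ, P.degree ≤ (n + 1 : ℕ) ∧
        ∀ z : ℂ, z ≠ 0 → z ^ 2 ≠ 1 →
          A₁ z * (q ^ n * z ^ n + q⁻¹ ^ n * z⁻¹ ^ n)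
              + A₂ z * (q⁻¹ ^ n * z ^ n + q ^ n * z⁻¹ ^ n)
            = P.eval (z + z⁻¹)) ↔
    (∃ a₀₀ a₀₁ a₁₀ a₁₁ a₁₂ : ℂ, ∀ z : ℂ, z ≠ 0 → z ^ 2 ≠ 1 →
        A₁ z = ((a₁₂ * q - a₀₁) * z ^ 4 + (q * a₁₁ - a₀₀) * z ^ 3
            - ((1 + q ^ 2) * a₀₁ - q * a₁₀) * z ^ 2
            + q * (a₁₁ - q * a₀₀) * z + q * (a₁₂ - q * a₀₁))
            / (z * (1 - z ^ 2) * (1 - q ^ 2)) ∧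
        A₂ z = A₁ z⁻¹) := by
  constructor
  · intro h
    obtain ⟨P₀, hd₀, h₀⟩ := h 0
    obtain ⟨P₁, hd₁, h₁⟩ := h 1
    refine ⟨P₀.coeff 0 / 2, P₀.coeff 1 / 2, P₁.coeff 0 + 2 * P₁.coeff 2, P₁.coeff 1,
      P₁.coeff 2, ?_⟩
    have hq1 : q * q⁻¹ = 1 := mul_inv_cancel₀ hq
    have hqd : q - q⁻¹ ≠ 0 := sub_ne_zero.mpr fun hh => hq2 (by
      rw [sq]; nth_rewrite 2 [hh]; exact hq1)
    have h2q : (1 : ℂ) - q ^ 2 ≠ 0 := one_sub_sq_ne q hq2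
    have hnd0 : P₀.natDegree < 2 := Nat.lt_succ_of_le (natDegree_le_of_degree_le hd₀)
    have hnd1 : P₁.natDegree < 3 := Nat.lt_succ_of_le (natDegree_le_of_degree_le hd₁)
    have key : ∀ w : ℂ, w ≠ 0 → w ^ 2 ≠ 1 →
        A₁ w = ((P₁.coeff 2 * q - P₀.coeff 1 / 2) * w ^ 4 + (q * P₁.coeff 1 - P₀.coeff 0 / 2) * w ^ 3
          - ((1 + q ^ 2) * (P₀.coeff 1 / 2) - q * (P₁.coeff 0 + 2 * P₁.coeff 2)) * w ^ 2
          + q * (P₁.coeff 1 - q * (P₀.coeff 0 / 2)) * w + q * (P₁.coeff 2 - q * (P₀.coeff 1 / 2)))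
          / (w * (1 - w ^ 2) * (1 - q ^ 2)) ∧
        A₂ w = ((P₁.coeff 2 * q - P₀.coeff 1 / 2) * w⁻¹ ^ 4 + (q * P₁.coeff 1 - P₀.coeff 0 / 2) * w⁻¹ ^ 3
          - ((1 + q ^ 2) * (P₀.coeff 1 / 2) - q * (P₁.coeff 0 + 2 * P₁.coeff 2)) * w⁻¹ ^ 2
          + q * (P₁.coeff 1 - q * (P₀.coeff 0 / 2)) * w⁻¹ + q * (P₁.coeff 2 - q * (P₀.coeff 1 / 2)))
          / (w⁻¹ * (1 - w⁻¹ ^ 2) * (1 - q ^ 2)) := by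
      intro w hw hw2
      have hw1 : w * w⁻¹ = 1 := mul_inv_cancel₀ hw
      have hwd : w - w⁻¹ ≠ 0 := sub_ne_zero.mpr fun hh => hw2 (by
        rw [sq]; nth_rewrite 2 [hh]; exact hw1)
      have hden : w * (1 - w ^ 2) * (1 - q ^ 2) ≠ 0 :=
        mul_ne_zero (mul_ne_zero hw (one_sub_sq_ne w hw2)) h2q
      have hdeni : w⁻¹ * (1 - w⁻¹ ^ 2) * (1 - q ^ 2) ≠ 0 :=
        mul_ne_zero (mul_ne_zero (inv_ne_zero hw) (one_sub_inv_sq_ne w hw2)) h2q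
      have hd : (q - q⁻¹) * (w - w⁻¹) ≠ 0 := mul_ne_zero hqd hwd
      have h0 := h₀ w hw hw2
      have h1 := h₁ w hw hw2
      rw [eval_eq_sum_range' hnd0] at h0
      rw [eval_eq_sum_range' hnd1] at h1
      simp only [Finset.sum_range_succ, Finset.sum_range_zero, zero_add, pow_zero, mul_one,
        pow_one] at h0 h1
      have hA1v : A₁ w = (P₁.coeff 0 + P₁.coeff 1 * (w + w⁻¹) + P₁.coeff 2 * (w + w⁻¹) ^ 2
          - (q⁻¹ * w + q * w⁻¹) * (P₀.coeff 0 + P₀.coeff 1 * (w + w⁻¹)) / 2)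
          / ((q - q⁻¹) * (w - w⁻¹)) := by
        rw [eq_div_iff hd]
        linear_combination h1 - ((q⁻¹ * w + q * w⁻¹) / 2) * h0
      have hA2v : A₂ w = ((q * w + q⁻¹ * w⁻¹) * (P₀.coeff 0 + P₀.coeff 1 * (w + w⁻¹)) / 2
          - (P₁.coeff 0 + P₁.coeff 1 * (w + w⁻¹) + P₁.coeff 2 * (w + w⁻¹) ^ 2))
          / ((q - q⁻¹) * (w - w⁻¹)) := by
        rw [eq_div_iff hd]
        linear_combination ((q * w + q⁻¹ * w⁻¹) / 2) * h0 - h1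
      constructor
      · rw [hA1v, div_eq_div_iff hd hden]
        linear_combination ((P₁.coeff 1) + (-1/2 : ℂ) * q * (P₀.coeff 0) + (-1 : ℂ) * q * q⁻¹ * (P₁.coeff 1) + (1/2 : ℂ) * q ^ 2 * q⁻¹ * (P₀.coeff 0) + w⁻¹ * (P₁.coeff 2) + (-1/2 : ℂ) * w⁻¹ * q * (P₀.coeff 1) + (-1 : ℂ) * w⁻¹ * q ^ 2 * (P₁.coeff 2) + (1/2 : ℂ) * w⁻¹ * q ^ 3 * (P₀.coeff 1) + w * (P₁.coeff 2) + (-1/2 : ℂ) * w * q * (P₀.coeff 1) + (-2 : ℂ) * w * q * q⁻¹ * (P₁.coeff 2) + (-1 : ℂ) * w * q * q⁻¹ * (P₁.coeff 0) + w * q ^ 2 * (P₁.coeff 2) + w * q ^ 2 * (P₁.coeff 0) + w * q ^ 2 * q⁻¹ * (P₀.coeff 1) + (-1/2 : ℂ) * w * q ^ 3 * (P₀.coeff 1) + (-1 : ℂ) * w ^ 2 * (P₁.coeff 1) + (1/2 : ℂ) * w ^ 2 * q⁻¹ * (P₀.coeff 0) + (-1 : ℂ) * w ^ 2 * q * q⁻¹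 * (P₁.coeff 1) + (2 : ℂ) * w ^ 2 * q ^ 2 * (P₁.coeff 1) + (-1/2 : ℂ) * w ^ 2 * q ^ 3 * (P₀.coeff 0) + (-1 : ℂ) * w ^ 2 * w⁻¹ * (P₁.coeff 2) + (1/2 : ℂ) * w ^ 2 * w⁻¹ * q * (P₀.coeff 1) + w ^ 2 * w⁻¹ * q ^ 2 * (P₁.coeff 2) + (-1/2 : ℂ) * w ^ 2 * w⁻¹ * q ^ 3 * (P₀.coeff 1) + (-2 : ℂ) * w ^ 3 * (P₁.coeff 2) + w ^ 3 * q⁻¹ * (P₀.coeff 1) + (-1 : ℂ) * w ^ 3 * q * q⁻¹ * (P₁.coeff 2) + (3 : ℂ) * w ^ 3 * q ^ 2 * (P₁.coeff 2) + (-1/2 : ℂ) * w ^ 3 * q ^ 2 * q⁻¹ * (P₀.coeff 1) + (-1/2 : ℂ) * w ^ 3 * q ^ 3 * (P₀.coeff 1)) * hw1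
          + ((-1 : ℂ) * (P₁.coeff 1) + (1/2 : ℂ) * q * (P₀.coeff 0) + (-1 : ℂ) * w⁻¹ * (P₁.coeff 2) + (1/2 : ℂ) * w⁻¹ * q * (P₀.coeff 1) + (-1 : ℂ) * w * (P₁.coeff 2) + (-1 : ℂ) * w * (P₁.coeff 0) + (1/2 : ℂ) * w * q * (P₀.coeff 1) + w ^ 3 * (P₁.coeff 2) + w ^ 3 * (P₁.coeff 0) + (-1/2 : ℂ) * w ^ 3 * q * (P₀.coeff 1) + w ^ 4 * (P₁.coeff 1) + (-1/2 : ℂ) * w ^ 4 * q * (P₀.coeff 0) + w ^ 5 * (P₁.coeff 2) + (-1/2 : ℂ) * w ^ 5 * q * (P₀.coeff 1)) * hq1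
      · rw [hA2v, div_eq_div_iff hd hdeni]
        linear_combination ((-1 : ℂ) * (P₁.coeff 1) + (1/2 : ℂ) * q * (P₀.coeff 0) + q * q⁻¹ * (P₁.coeff 1) + (-1/2 : ℂ) * q ^ 2 * q⁻¹ * (P₀.coeff 0) + (-1 : ℂ) * w⁻¹ * (P₁.coeff 2) + (1/2 : ℂ) * w⁻¹ * q * (P₀.coeff 1) + (2 : ℂ) * w⁻¹ * q * q⁻¹ * (P₁.coeff 2) + w⁻¹ * q * q⁻¹ * (P₁.coeff 0) + (-1 : ℂ) * w⁻¹ * q ^ 2 * (P₁.coeff 2) + (-1 : ℂ) * w⁻¹ * q ^ 2 * (P₁.coeff 0) + (-1 : ℂ) * w⁻¹ * q ^ 2 * q⁻¹ * (P₀.coeff 1) + (1/2 : ℂ) * w⁻¹ * q ^ 3 * (P₀.coeff 1) + w⁻¹ ^ 2 * (P₁.coeff 1) + (-1/2 : ℂ) * w⁻¹ ^ 2 * q⁻¹ * (P₀.coeff 0) + w⁻¹ ^ 2 * q * q⁻¹ * (P₁.coeff 1) + (-2 : ℂ) * w⁻¹ ^ 2 * q ^ 2 * (P₁.coeff 1)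 + (1/2 : ℂ) * w⁻¹ ^ 2 * q ^ 3 * (P₀.coeff 0) + (2 : ℂ) * w⁻¹ ^ 3 * (P₁.coeff 2) + (-1 : ℂ) * w⁻¹ ^ 3 * q⁻¹ * (P₀.coeff 1) + w⁻¹ ^ 3 * q * q⁻¹ * (P₁.coeff 2) + (-3 : ℂ) * w⁻¹ ^ 3 * q ^ 2 * (P₁.coeff 2) + (1/2 : ℂ) * w⁻¹ ^ 3 * q ^ 2 * q⁻¹ * (P₀.coeff 1) + (1/2 : ℂ) * w⁻¹ ^ 3 * q ^ 3 * (P₀.coeff 1) + (-1 : ℂ) * w * (P₁.coeff 2) + (1/2 : ℂ) * w * q * (P₀.coeff 1) + w * q ^ 2 * (P₁.coeff 2) + (-1/2 : ℂ) * w * q ^ 3 * (P₀.coeff 1) + w * w⁻¹ ^ 2 * (P₁.coeff 2) + (-1/2 : ℂ) * w * w⁻¹ ^ 2 * q * (P₀.coeff 1) + (-1 : ℂ) * w * w⁻¹ ^ 2 * q ^ 2 * (P₁.coeff 2) + (1/2 : ℂ) * w * w⁻¹ ^ 2 * q ^ 3 * (P₀.coeff 1)) * hw1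
          + ((P₁.coeff 1) + (-1/2 : ℂ) * q * (P₀.coeff 0) + w⁻¹ * (P₁.coeff 2) + w⁻¹ * (P₁.coeff 0) + (-1/2 : ℂ) * w⁻¹ * q * (P₀.coeff 1) + (-1 : ℂ) * w⁻¹ ^ 3 * (P₁.coeff 2) + (-1 : ℂ) * w⁻¹ ^ 3 * (P₁.coeff 0) + (1/2 : ℂ) * w⁻¹ ^ 3 * q * (P₀.coeff 1) + (-1 : ℂ) * w⁻¹ ^ 4 * (P₁.coeff 1) + (1/2 : ℂ) * w⁻¹ ^ 4 * q * (P₀.coeff 0) + (-1 : ℂ) * w⁻¹ ^ 5 * (P₁.coeff 2) + (1/2 : ℂ) * w⁻¹ ^ 5 * q * (P₀.coeff 1) + w * (P₁.coeff 2) + (-1/2 : ℂ) * w * q * (P₀.coeff 1)) * hq1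
    intro z hz hz2
    refine ⟨(key z hz hz2).1, ?_⟩
    rw [(key z⁻¹ (inv_ne_zero hz) (inv_sq_ne_one z hz2)).1]
    exact (key z hz hz2).2
  · rintro ⟨a₀₀, a₀₁, a₁₀, a₁₁, a₁₂, hA⟩ n
    obtain ⟨P, Q, hdP, hdQ, hPQ⟩ := sHeun_aux q hq
      ((q * a₁₂ - q ^ 2 * a₀₁) / (1 - q ^ 2)) ((q * a₁₁ - q ^ 2 * a₀₀) / (1 - q ^ 2))
      ((q * a₁₀ - (1 + q ^ 2) * a₀₁) / (1 - q ^ 2)) ((q * a₁₁ - a₀₀) / (1 - q ^ 2))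
      ((a₁₂ * q - a₀₁) / (1 - q ^ 2)) n
    refine ⟨P, hdP, fun z hz hz2 => ?_⟩
    have hzi : z⁻¹ ≠ 0 := inv_ne_zero hz
    have hz2i : (z⁻¹) ^ 2 ≠ 1 := inv_sq_ne_one z hz2
    rw [(hA z hz hz2).1, (hA z hz hz2).2, (hA z⁻¹ hzi hz2i).1,
      formula_eq q z a₀₀ a₀₁ a₁₀ a₁₁ a₁₂ hq2 hz hz2,
      formula_eq q z⁻¹ a₀₀ a₀₁ a₁₀ a₁₁ a₁₂ hq2 hzi hz2i]
    exact (hPQ z hz hz2).1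
end

section
/- Let q ∈ ℂ with q ≠ 0 which is not a root of unity. The five S-Heun operators L, M₁, M₂, R₁, R₂ are linearly independent: if c₀, c₁, c₂, c₃, c₄ ∈ ℂ are such that c₀(Lf)(z) + c₁(M₁f)(z) + c₂(M₂f)(z) + c₃(R₁f)(z) + c₄(R₂f)(z) = 0 for every function f : ℂ → ℂ and every z ∈ ℂ with z ≠ 0 and z² ≠ 1, then c₀ = c₁ = c₂ = c₃ = c₄ = 0. -/
noncomputable def Lop (q : ℂ) (f : ℂ → ℂ) (z : ℂ) : ℂ :=
  (f (q * z) - f (q⁻¹ * z)) / ((q - q⁻¹) * (z - z⁻¹))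

noncomputable def M1op (q : ℂ) (f : ℂ → ℂ) (z : ℂ) : ℂ :=
  ((q * z + q⁻¹ * z⁻¹) * f (q⁻¹ * z) - (q⁻¹ * z + q * z⁻¹) * f (q * z))
    / ((q - q⁻¹) * (z - z⁻¹))

noncomputable def M2op (q : ℂ) (f : ℂ → ℂ) (z : ℂ) : ℂ :=
  (z + z⁻¹) * (f (q * z) - f (q⁻¹ * z)) / ((q - q⁻¹) * (z - z⁻¹))

noncomputable def R1op (q : ℂ) (f : ℂ → ℂ) (z : ℂ) : ℂ :=
  (z + z⁻¹) * ((q * z + q⁻¹ * z⁻¹) * f (q⁻¹ * z) - (q⁻¹ * z + q * z⁻¹) * f (q * z))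
    / ((q - q⁻¹) * (z - z⁻¹))

noncomputable def R2op (q : ℂ) (f : ℂ → ℂ) (z : ℂ) : ℂ :=
  1 / (q - q⁻¹) *
    (q ^ 2 * (z + z⁻¹) * (z * f (q⁻¹ * z) - z⁻¹ * f (q * z)) / (z - z⁻¹)
      - (z * f (q⁻¹ * z) + z⁻¹ * f (q * z)))

/-! Applied to a function that is `1` at `q z` and `0` at `q⁻¹ z`, the combination, multiplied by
the common denominator `q z² (q - q⁻¹)(z - z⁻¹)`, becomes a quartic polynomial in `z`. It vanishes
at the infinitely many admissible `z`, so its coefficients vanish; they form a triangular system in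
`c₀, …, c₄` whose pivots are products of `q` and `q² - 1`. -/

open Polynomial in
theorem quartic_coeffs_eq_zero_of_infinite {R : Type*} [CommRing R] [IsDomain R] {s : Set R}
    (hs : s.Infinite) {a b c d e : R}
    (h : ∀ z ∈ s, a * z ^ 4 + b * z ^ 3 + c * z ^ 2 + d * z + e = 0) :
    a = 0 ∧ b = 0 ∧ c = 0 ∧ d = 0 ∧ e = 0 := by
  set p : R[X] := C a * X ^ 4 + C b * X ^ 3 + C c * X ^ 2 + C d * X + C e
  have hp : p = 0 := p.eq_zero_of_infinite_isRoot <| hs.mono fun z hz => by simpa [p] using h z hz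
  have hcoeff (k : ℕ) : p.coeff k = 0 := by rw [hp, coeff_zero]
  refine ⟨?_, ?_, ?_, ?_, ?_⟩
  · simpa [p] using hcoeff 4
  · simpa [p] using hcoeff 3
  · simpa [p] using hcoeff 2
  · simpa [p] using hcoeff 1
  · simpa [p] using hcoeff 0

theorem sub_inv_ne_zero_s17 {K : Type*} [Field K] {x : K} (hx : x ≠ 0) (hx2 : x ^ 2 ≠ 1) :
    x - x⁻¹ ≠ 0 := by
  rw [sub_ne_zero]
  contrapose! hx2
  rw [sq, ← inv_mul_cancel₀ hx, ← hx2]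

theorem setOf_ne_zero_and_sq_ne_one_infinite {R : Type*} [Ring R] [NoZeroDivisors R]
    [Infinite R] : {x : R | x ≠ 0 ∧ x ^ 2 ≠ 1}.Infinite :=
  ({0, 1, -1} : Set R).toFinite.infinite_compl.mono fun x hx => by simp_all

theorem sHeun_combination_mul_eq {q z : ℂ} (hq : q ≠ 0) (hq2 : q ^ 2 ≠ 1) (hz : z ≠ 0)
    (hz2 : z ^ 2 ≠ 1) {f : ℂ → ℂ} (hf₁ : f (q * z) = 1) (hf₀ : f (q⁻¹ * z) = 0)
    (c₀ c₁ c₂ c₃ c₄ : ℂ) :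
    q * z ^ 2 * ((q - q⁻¹) * (z - z⁻¹)) *
        (c₀ * Lop q f z + c₁ * M1op q f z + c₂ * M2op q f z + c₃ * R1op q f z + c₄ * R2op q f z)
      = -c₃ * z ^ 4 + (c₂ * q - c₁) * z ^ 3 + (c₀ * q - (c₃ + c₄ * q) * (q ^ 2 + 1)) * z ^ 2
          + (c₂ * q - c₁ * q ^ 2) * z + (c₄ * q * (1 - q ^ 2) - c₃ * q ^ 2) := by
  have hqq := sub_inv_ne_zero_s17 hq hq2
  have hzz := sub_inv_ne_zero_s17 hz hz2
  simp only [Lop, M1op, M2op, R1op, R2op, hf₁, hf₀]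
  field_simp
  ring

theorem sHeun_quartic_eq_zero {q z : ℂ} (hq : q ≠ 0) (hq2 : q ^ 2 ≠ 1) (hz : z ≠ 0)
    (hz2 : z ^ 2 ≠ 1) {c₀ c₁ c₂ c₃ c₄ : ℂ}
    (h : ∀ f : ℂ → ℂ,
      c₀ * Lop q f z + c₁ * M1op q f z + c₂ * M2op q f z + c₃ * R1op q f z + c₄ * R2op q f z = 0) :
    -c₃ * z ^ 4 + (c₂ * q - c₁) * z ^ 3 + (c₀ * q - (c₃ + c₄ * q) * (q ^ 2 + 1)) * z ^ 2
      + (c₂ * q - c₁ * q ^ 2) * z + (c₄ * q * (1 - q ^ 2) - c₃ * q ^ 2) = 0 := by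
  have hne : q⁻¹ * z ≠ q * z := fun hc =>
    sub_ne_zero.mp (sub_inv_ne_zero_s17 hq hq2) (mul_right_cancel₀ hz hc).symm
  rw [← sHeun_combination_mul_eq hq hq2 hz hz2 (f := fun x => if x = q * z then 1 else 0)
    (if_pos rfl) (if_neg hne), h, mul_zero]

/-- the five S-Heun operators `L, M₁, M₂, R₁, R₂` are linearly
independent (for `q` not a root of unity). -/
theorem sHeun_linearly_independent (q : ℂ) (hq : q ≠ 0)
    (hroot : ∀ n : ℕ, 0 < n → q ^ n ≠ 1)
    (c₀ c₁ c₂ c₃ c₄ : ℂ)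
    (h : ∀ (f : ℂ → ℂ) (z : ℂ), z ≠ 0 → z ^ 2 ≠ 1 →
        c₀ * Lop q f z + c₁ * M1op q f z + c₂ * M2op q f z
          + c₃ * R1op q f z + c₄ * R2op q f z = 0) :
    c₀ = 0 ∧ c₁ = 0 ∧ c₂ = 0 ∧ c₃ = 0 ∧ c₄ = 0 := by
  have hq2 : q ^ 2 ≠ 1 := hroot 2 two_pos
  obtain ⟨h₄, h₃, h₂, h₁, h₀⟩ := quartic_coeffs_eq_zero_of_infinite
    setOf_ne_zero_and_sq_ne_one_infinite fun z hz =>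
      sHeun_quartic_eq_zero hq hq2 hz.1 hz.2 (h · z hz.1 hz.2)
  have hc₃ : c₃ = 0 := neg_eq_zero.mp h₄
  have hc₁ : c₁ = 0 := (mul_eq_zero_iff_right (sub_ne_zero.mpr hq2)).mp <| by
    linear_combination h₃ - h₁
  have hc₂ : c₂ = 0 := (mul_eq_zero_iff_right hq).mp <| by linear_combination h₃ + hc₁
  have hc₄ : c₄ = 0 := (mul_eq_zero_iff_right (mul_ne_zero hq (sub_ne_zero.mpr hq2.symm))).mp <|
    by linear_combination h₀ + q ^ 2 * hc₃
  have hc₀ : c₀ = 0 := (mul_eq_zero_iff_right hq).mp <| by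
    linear_combination h₂ + (q ^ 2 + 1) * hc₃ + q * (q ^ 2 + 1) * hc₄
  exact ⟨hc₀, hc₁, hc₂, hc₃, hc₄⟩
end

section
/- Let q ∈ ℂ with q ≠ 0 and q⁴ ≠ 1. The operator X of multiplication by x = z + z⁻¹ is the following quadratic expression in the S-Heun operators: pointwise on every f : ℂ → ℂ at every z ∈ ℂ with z ≠ 0 and q^{2k}z² ≠ 1 for k ∈ {−1,0,1}, (1/(q² − q⁻²))·[ (1 + q⁻⁴)·( q·(M₂(R₂f))(z) − (R₂(M₂f))(z) ) + 2q⁻³·( q·(M₁(R₂f))(z) − (R₂(M₁f))(z) ) ] = (z + z⁻¹)·f(z). -/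
/-!
M₁, M₂ and R₂ are all first-order q-difference operators
`f ↦ a(z) f(q⁻¹z) + b(z) f(qz)`, so each of the four composites is a combination of
`f(q⁻²z)`, `f(z)` and `f(q²z)` whose coefficients are products of the coefficient functions
evaluated at `z` and at `q^{±1} z`. The theorem is then three identities of rational functions
in `q` and `z`: in the combination the coefficients of `f(q^{±2}z)` cancel, and that of `f(z)`
is `z + z⁻¹`.
-/

section QDifferenceOp

variable {K : Type*} [Field K]

def qDifferenceOp (q : K) (a b f : K → K) (z : K) : K :=
  a z * f (q⁻¹ * z) + b z * f (q * z)

theorem qDifferenceOp_comp {q : K} (hq : q ≠ 0) (a b c d f : K → K) (z : K) :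
    qDifferenceOp q a b (qDifferenceOp q c d f) z =
      a z * c (q⁻¹ * z) * f (q⁻¹ * (q⁻¹ * z))
        + (a z * d (q⁻¹ * z) + b z * c (q * z)) * f z
        + b z * d (q * z) * f (q * (q * z)) := by
  simp only [qDifferenceOp, mul_inv_cancel_left₀ hq, inv_mul_cancel_left₀ hq]
  ring

end QDifferenceOp

noncomputable section SHeunCoefficients

variable (q : ℂ)

def m1CoeffDown (z : ℂ) : ℂ := (q * z + q⁻¹ * z⁻¹) / ((q - q⁻¹) * (z - z⁻¹))

def m1CoeffUp (z : ℂ) : ℂ := -(q⁻¹ * z + q * z⁻¹) / ((q - q⁻¹) * (z - z⁻¹))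

def m2Coeff (z : ℂ) : ℂ := (z + z⁻¹) / ((q - q⁻¹) * (z - z⁻¹))

def r2CoeffDown (z : ℂ) : ℂ := (q ^ 2 * (z + z⁻¹) * z / (z - z⁻¹) - z) / (q - q⁻¹)

def r2CoeffUp (z : ℂ) : ℂ := -(q ^ 2 * (z + z⁻¹) * z⁻¹ / (z - z⁻¹) + z⁻¹) / (q - q⁻¹)

theorem M1op_eq_qDifferenceOp : M1op q = qDifferenceOp q (m1CoeffDown q) (m1CoeffUp q) := by
  ext f z
  simp only [M1op, qDifferenceOp, m1CoeffDown, m1CoeffUp]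
  ring

theorem M2op_eq_qDifferenceOp : M2op q = qDifferenceOp q (-m2Coeff q) (m2Coeff q) := by
  ext f z
  simp only [M2op, qDifferenceOp, m2Coeff, Pi.neg_apply]
  ring

theorem R2op_eq_qDifferenceOp : R2op q = qDifferenceOp q (r2CoeffDown q) (r2CoeffUp q) := by
  ext f z
  simp only [R2op, qDifferenceOp, r2CoeffDown, r2CoeffUp]
  ring

end SHeunCoefficients

section CoefficientIdentities

variable {q z : ℂ}

theorem sq_sub_one_ne_zero_of_pow_four_ne_one (hq4 : q ^ 4 ≠ 1) : q ^ 2 - 1 ≠ 0 :=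
  fun h => hq4 (by linear_combination (q ^ 2 + 1) * h)

theorem sHeun_coeff_shift_up_eq_zero (hq : q ≠ 0) (hq4 : q ^ 4 ≠ 1) (h0 : z ^ 2 ≠ 1)
    (h1 : q ^ 2 * z ^ 2 ≠ 1) :
    1 / (q ^ 2 - q⁻¹ ^ 2) *
        ((1 + q⁻¹ ^ 4) * (q * (m2Coeff q z * r2CoeffUp q (q * z))
            - r2CoeffUp q z * m2Coeff q (q * z))
          + 2 * q⁻¹ ^ 3 * (q * (m1CoeffUp q z * r2CoeffUp q (q * z))
            - r2CoeffUp q z * m1CoeffUp q (q * z))) = 0 := by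
  have hq2 := sq_sub_one_ne_zero_of_pow_four_ne_one hq4
  have hq41 : q ^ 4 - 1 ≠ 0 := sub_ne_zero.mpr hq4
  have hz2 : z ^ 2 - 1 ≠ 0 := sub_ne_zero.mpr h0
  have hqz2 : q ^ 2 * z ^ 2 - 1 ≠ 0 := sub_ne_zero.mpr h1
  simp only [m1CoeffUp, m2Coeff, r2CoeffUp]
  field_simp
  ring

theorem sHeun_coeff_shift_down_eq_zero (hq : q ≠ 0) (hq4 : q ^ 4 ≠ 1) (h0 : z ^ 2 ≠ 1)
    (hzq : z ^ 2 ≠ q ^ 2) :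
    1 / (q ^ 2 - q⁻¹ ^ 2) *
        ((1 + q⁻¹ ^ 4) * (q * (-m2Coeff q z * r2CoeffDown q (q⁻¹ * z))
            + r2CoeffDown q z * m2Coeff q (q⁻¹ * z))
          + 2 * q⁻¹ ^ 3 * (q * (m1CoeffDown q z * r2CoeffDown q (q⁻¹ * z))
            - r2CoeffDown q z * m1CoeffDown q (q⁻¹ * z))) = 0 := by
  have hq2 := sq_sub_one_ne_zero_of_pow_four_ne_one hq4
  have hq41 : q ^ 4 - 1 ≠ 0 := sub_ne_zero.mpr hq4
  have hz2 : z ^ 2 - 1 ≠ 0 := sub_ne_zero.mpr h0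
  have hzq2 : z ^ 2 - q ^ 2 ≠ 0 := sub_ne_zero.mpr hzq
  simp only [m1CoeffDown, m2Coeff, r2CoeffDown]
  field_simp
  ring

theorem sHeun_coeff_center_eq (hq : q ≠ 0) (hq4 : q ^ 4 ≠ 1) (h0 : z ^ 2 ≠ 1)
    (h1 : q ^ 2 * z ^ 2 ≠ 1) (hzq : z ^ 2 ≠ q ^ 2) :
    1 / (q ^ 2 - q⁻¹ ^ 2) *
        ((1 + q⁻¹ ^ 4) *
            (q * (-m2Coeff q z * r2CoeffUp q (q⁻¹ * z) + m2Coeff q z * r2CoeffDown q (q * z))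
              - (r2CoeffDown q z * m2Coeff q (q⁻¹ * z) - r2CoeffUp q z * m2Coeff q (q * z)))
          + 2 * q⁻¹ ^ 3 *
            (q * (m1CoeffDown q z * r2CoeffUp q (q⁻¹ * z)
                + m1CoeffUp q z * r2CoeffDown q (q * z))
              - (r2CoeffDown q z * m1CoeffUp q (q⁻¹ * z)
                + r2CoeffUp q z * m1CoeffDown q (q * z)))) = z + z⁻¹ := by
  have hq2 := sq_sub_one_ne_zero_of_pow_four_ne_one hq4
  have hq41 : q ^ 4 - 1 ≠ 0 := sub_ne_zero.mpr hq4
  have hz2 : z ^ 2 - 1 ≠ 0 := sub_ne_zero.mpr h0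
  have hqz2 : q ^ 2 * z ^ 2 - 1 ≠ 0 := sub_ne_zero.mpr h1
  have hzq2 : z ^ 2 - q ^ 2 ≠ 0 := sub_ne_zero.mpr hzq
  simp only [m1CoeffUp, m1CoeffDown, m2Coeff, r2CoeffUp, r2CoeffDown]
  field_simp
  ring

end CoefficientIdentities

theorem x_as_quadratic_in_sHeun_general (q : ℂ) (hq : q ≠ 0) (hq4 : q ^ 4 ≠ 1)
    (f : ℂ → ℂ) (z : ℂ)
    (h0 : z ^ 2 ≠ 1) (h1 : q ^ 2 * z ^ 2 ≠ 1) (hm1 : q⁻¹ ^ 2 * z ^ 2 ≠ 1) :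
    1 / (q ^ 2 - q⁻¹ ^ 2) *
        ((1 + q⁻¹ ^ 4) * (q * M2op q (R2op q f) z - R2op q (M2op q f) z)
          + 2 * q⁻¹ ^ 3 * (q * M1op q (R2op q f) z - R2op q (M1op q f) z))
      = (z + z⁻¹) * f z := by
  have hzq : z ^ 2 ≠ q ^ 2 := fun h =>
    hm1 (by rw [h, inv_pow, inv_mul_cancel₀ (pow_ne_zero 2 hq)])
  rw [M1op_eq_qDifferenceOp, M2op_eq_qDifferenceOp, R2op_eq_qDifferenceOp]
  simp only [qDifferenceOp_comp hq, Pi.neg_apply]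
  linear_combination f (q⁻¹ * (q⁻¹ * z)) * sHeun_coeff_shift_down_eq_zero hq hq4 h0 hzq
    + f z * sHeun_coeff_center_eq hq hq4 h0 h1 hzq
    + f (q * (q * z)) * sHeun_coeff_shift_up_eq_zero hq hq4 h0 h1

/-- multiplication by `x = z + z⁻¹` is the quadratic expression
`(1/(q²-q⁻²))[(1+q⁻⁴)(qM₂R₂ - R₂M₂) + 2q⁻³(qM₁R₂ - R₂M₁)]` in the S-Heun
operators, pointwise. -/
theorem x_as_quadratic_in_sHeun (q : ℂ) (hq : q ≠ 0) (hq4 : q ^ 4 ≠ 1)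
    (f : ℂ → ℂ) (z : ℂ) (hz : z ≠ 0)
    (h0 : z ^ 2 ≠ 1) (h1 : q ^ 2 * z ^ 2 ≠ 1) (hm1 : q⁻¹ ^ 2 * z ^ 2 ≠ 1) :
    1 / (q ^ 2 - q⁻¹ ^ 2) *
        ((1 + q⁻¹ ^ 4) * (q * M2op q (R2op q f) z - R2op q (M2op q f) z)
          + 2 * q⁻¹ ^ 3 * (q * M1op q (R2op q f) z - R2op q (M1op q f) z))
      = (z + z⁻¹) * f z :=
  x_as_quadratic_in_sHeun_general q hq hq4 f z h0 h1 hm1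
end
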